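/- arXiv:1510.07140 — 4 statements merged into one kernel-verified Lean document; each statement's English description precedes it below -/
import Mathlib

section
/- Gowers–Cauchy–Schwarz inequality for ℓ-box norms: Let e be a nonempty finite index set, ℓ ≥ 2 an even integer, and for each ω ∈ {0,…,ℓ-1}^e let f_ω be an integrable function on the product probability space X_e. Then |E[∏_{ω ∈ {0,…,ℓ-1}^e} f_ω(x_e^{(ω)}) | x_e^{(0)},…,x_e^{(ℓ-1)} ∈ X_e]| ≤ ∏_{ω ∈ {0,…,ℓ-1}^e} ‖f_ω‖_{□_ℓ(X_e)}. -/
open MeasureTheory Finset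

/-- The `ℓ`-box norm over the coordinates in `e` of a function `f` on the product
of the probability spaces `(X i, μ i)`. -/
noncomputable def boxNormOn {ι : Type*} [Fintype ι] [DecidableEq ι] {X : ι → Type*}
    [∀ i, MeasurableSpace (X i)] (μ : ∀ i, Measure (X i))
    (e : Finset ι) (ℓ : ℕ) (f : (∀ i, X i) → ℝ) : ℝ :=
  (∫ x : ∀ i, Fin ℓ → X i,
      ∏ ω ∈ Finset.univ.filter (fun ω : ι → Fin ℓ => ∀ i ∉ e, (ω i : ℕ) = 0),
        f (fun i => x i (ω i))
    ∂(Measure.pi fun i => Measure.pi fun _ : Fin ℓ => μ i)) ^ (((ℓ : ℝ) ^ e.card)⁻¹)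


/-!
Induction on the number of coordinates, carrying a spectator variable `z` on which all the
functions may depend. Split off a coordinate `j`. By Fubini the Gowers integral is `∫ ∏ₛ hₛ`,
where `hₛ` integrates over the `j`-th coordinate the factors at the vertices `ω` with `ω j = s`,
and Hölder with `ℓ` equal exponents bounds it by `∏ₛ (∫ hₛ ^ ℓ) ^ (1 / ℓ)`. Since `ℓ` is even,
`∫ hₛ ^ ℓ` is again a Gowers integral over the remaining coordinates, the `ℓ` copies of the
`j`-th coordinate joining the spectator, so the induction hypothesis bounds it by box integrals;
the same regrouping identifies these with the box integrals over all coordinates. Evenness also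
makes the box integrals nonnegative. The integrability of the mixed products used along the way
comes from the same argument run in `ℝ≥0∞` on the `‖f ω‖ₑ`.
-/

open scoped ENNReal

universe u v w

theorem enorm_prod {R β : Type*} [SeminormedCommRing R] [NormMulClass R] [NormOneClass R]
    (s : Finset β) (f : β → R) : ‖∏ b ∈ s, f b‖ₑ = ∏ b ∈ s, ‖f b‖ₑ := by
  simp only [enorm_eq_nnnorm, nnnorm_prod, ENNReal.ofNNReal_finsetProd]

section SplitAt

variable {ι : Type*} [DecidableEq ι]

def MeasurableEquiv.piSplitAt (j : ι) (A : ι → Type*) [∀ i, MeasurableSpace (A i)] :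
    (∀ i, A i) ≃ᵐ A j × ∀ i : {i // i ≠ j}, A i where
  toEquiv := Equiv.piSplitAt j A
  measurable_toFun :=
    (measurable_pi_apply j).prodMk (measurable_pi_lambda _ fun i => measurable_pi_apply _)
  measurable_invFun := by
    refine measurable_pi_lambda _ fun i => ?_
    by_cases h : i = j
    · subst h
      simpa using measurable_fst
    · simp only [Equiv.piSplitAt_symm_apply, h, dite_false]
      exact (measurable_pi_apply _).comp measurable_snd

variable {A : ι → Type*} [∀ i, MeasurableSpace (A i)]

theorem MeasurableEquiv.coe_piSplitAt_symm (j : ι) :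
    ⇑(MeasurableEquiv.piSplitAt j A).symm = (Equiv.piSplitAt j A).symm := rfl

theorem measurePreserving_piSplitAt [Fintype ι] (m : ∀ i, Measure (A i))
    [∀ i, SigmaFinite (m i)] (j : ι) :
    MeasurePreserving (MeasurableEquiv.piSplitAt j A) (Measure.pi m)
      ((m j).prod (Measure.pi fun i : {i // i ≠ j} => m i)) := by
  refine MeasurePreserving.symm _ ⟨(MeasurableEquiv.piSplitAt j A).symm.measurable, ?_⟩
  refine (Measure.pi_eq fun s _ => ?_).symm
  have hbox : (MeasurableEquiv.piSplitAt j A).symm ⁻¹' Set.pi Set.univ s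
      = s j ×ˢ Set.pi Set.univ fun i : {i // i ≠ j} => s i := by
    ext ⟨a, y⟩
    simp only [Set.mem_preimage, Set.mem_pi, Set.mem_univ, true_implies, Set.mem_prod,
      MeasurableEquiv.coe_piSplitAt_symm]
    constructor
    · intro h
      exact ⟨by simpa using h j, fun i => by simpa [i.2] using h i⟩
    · rintro ⟨ha, hy⟩ i
      by_cases h : i = j
      · subst h
        simpa using ha
      · simpa [h] using hy ⟨i, h⟩
  rw [MeasurableEquiv.map_apply, hbox, Measure.prod_prod, Measure.pi_pi,
    Fintype.prod_eq_mul_prod_subtype_ne _ j]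

end SplitAt

section Holder

variable {α κ : Type*} [MeasurableSpace α] {μ : Measure α} [Fintype κ] [Nonempty κ]

theorem lintegral_prod_le_prod_lintegral_pow {f : κ → α → ℝ≥0∞}
    (hf : ∀ i, AEMeasurable (f i) μ) :
    ∫⁻ a, ∏ i, f i a ∂μ
      ≤ ∏ i, (∫⁻ a, f i a ^ Fintype.card κ ∂μ) ^ ((Fintype.card κ : ℝ)⁻¹) := by
  have hκ : (Fintype.card κ : ℝ) ≠ 0 := by positivity
  have h := ENNReal.lintegral_prod_norm_pow_le (μ := μ) univ
    (f := fun i a => f i a ^ Fintype.card κ) (p := fun _ => (Fintype.card κ : ℝ)⁻¹)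
    (fun i _ => (hf i).pow_const _) (by simp [hκ]) (fun _ _ => by positivity)
  simpa [← ENNReal.rpow_natCast, ← ENNReal.rpow_mul, hκ] using h

theorem abs_integral_prod_le_prod_integral_pow (hev : Even (Fintype.card κ)) {f : κ → α → ℝ}
    (hf : ∀ i, AEStronglyMeasurable (f i) μ)
    (hfi : ∀ i, Integrable (fun a => f i a ^ Fintype.card κ) μ) :
    |∫ a, ∏ i, f i a ∂μ|
      ≤ ∏ i, (∫ a, f i a ^ Fintype.card κ ∂μ) ^ ((Fintype.card κ : ℝ)⁻¹) := by
  have hpow : ∀ i a, 0 ≤ f i a ^ Fintype.card κ := fun i a => hev.pow_nonneg _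
  have hnorm : ∀ i a, ‖f i a‖ₑ ^ Fintype.card κ = ENNReal.ofReal (f i a ^ Fintype.card κ) := by
    intro i a
    rw [Real.enorm_eq_ofReal_abs, ← ENNReal.ofReal_pow (abs_nonneg _), hev.pow_abs]
  have hrhs : ∀ i, 0 ≤ (∫ a, f i a ^ Fintype.card κ ∂μ) ^ ((Fintype.card κ : ℝ)⁻¹) :=
    fun i => Real.rpow_nonneg (integral_nonneg (hpow i)) _
  rw [← ENNReal.ofReal_le_ofReal_iff (prod_nonneg fun i _ => hrhs i)]
  calc ENNReal.ofReal |∫ a, ∏ i, f i a ∂μ| = ‖∫ a, ∏ i, f i a ∂μ‖ₑ :=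
        (Real.enorm_eq_ofReal_abs _).symm
    _ ≤ ∫⁻ a, ∏ i, ‖f i a‖ₑ ∂μ := by
        simpa only [enorm_prod] using enorm_integral_le_lintegral_enorm (fun a => ∏ i, f i a)
    _ ≤ ∏ i, (∫⁻ a, ‖f i a‖ₑ ^ Fintype.card κ ∂μ) ^ ((Fintype.card κ : ℝ)⁻¹) :=
        lintegral_prod_le_prod_lintegral_pow fun i => (hf i).enorm
    _ = ENNReal.ofReal (∏ i, (∫ a, f i a ^ Fintype.card κ ∂μ) ^ ((Fintype.card κ : ℝ)⁻¹)) := by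
        rw [ENNReal.ofReal_prod_of_nonneg fun i _ => hrhs i]
        refine prod_congr rfl fun i _ => ?_
        rw [← ENNReal.ofReal_rpow_of_nonneg (integral_nonneg (hpow i)) (by positivity),
          ofReal_integral_eq_lintegral_ofReal (hfi i) (ae_of_all _ (hpow i))]
        simp_rw [hnorm]

end Holder

section Fiber

variable {W Y : Type*} [MeasurableSpace W] [MeasurableSpace Y] {ν : Measure W} {m : Measure Y}
  [SigmaFinite m] {ℓ : ℕ}

theorem lintegral_fin_prod_eq_prod {k : ℕ} (g : Fin k → Y → ℝ≥0∞)
    (hg : ∀ s, Measurable (g s)) :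
    ∫⁻ b, ∏ s, g s (b s) ∂(Measure.pi fun _ => m) = ∏ s, ∫⁻ u, g s u ∂m := by
  induction k with
  | zero => simp
  | succ k ih =>
    rw [← ((measurePreserving_piFinSuccAbove (fun _ => m) 0).symm).lintegral_comp_emb
      (MeasurableEquiv.measurableEmbedding _)]
    simp only [MeasurableEquiv.piFinSuccAbove_symm_apply, Fin.prod_univ_succ, Fin.insertNthEquiv,
      Equiv.coe_fn_mk, Fin.insertNth_zero', Fin.cons_zero, Fin.cons_succ]
    rw [lintegral_prod_mul (g := fun b : Fin k → Y => ∏ s, g s.succ (b s)) (hg 0).aemeasurable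
      (Finset.measurable_prod _ fun s _ => (hg s.succ).comp (measurable_pi_apply s)).aemeasurable,
      ih _ fun s => hg s.succ]

theorem lintegral_prod_fiber (G : Fin ℓ → W × Y → ℝ≥0∞) (hG : ∀ s, Measurable (G s)) :
    ∫⁻ q, ∏ s : Fin ℓ, G s (q.1, q.2 s) ∂(ν.prod (Measure.pi fun _ => m))
      = ∫⁻ w, ∏ s, ∫⁻ u, G s (w, u) ∂m ∂ν := by
  rw [lintegral_prod _ (by fun_prop)]
  congr with w
  exact lintegral_fin_prod_eq_prod _ fun s => (hG s).comp measurable_prodMk_left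

theorem lintegral_prod_fiber_le (hℓ : 0 < ℓ) (G : Fin ℓ → W × Y → ℝ≥0∞)
    (hG : ∀ s, Measurable (G s)) :
    ∫⁻ q, ∏ s : Fin ℓ, G s (q.1, q.2 s) ∂(ν.prod (Measure.pi fun _ => m))
      ≤ ∏ s, (∫⁻ q, ∏ v : Fin ℓ, G s (q.1, q.2 v) ∂(ν.prod (Measure.pi fun _ => m)))
          ^ ((ℓ : ℝ)⁻¹) := by
  have : Nonempty (Fin ℓ) := ⟨⟨0, hℓ⟩⟩
  simp only [lintegral_prod_fiber _ hG, lintegral_prod_fiber (fun _ => G _) fun _ => hG _,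
    prod_const, card_univ, Fintype.card_fin]
  simpa using lintegral_prod_le_prod_lintegral_pow (f := fun s w => ∫⁻ u, G s (w, u) ∂m)
    fun s => ((hG s).lintegral_prod_right').aemeasurable

variable [SigmaFinite ν]

theorem integral_prod_fiber (G : Fin ℓ → W × Y → ℝ)
    (hG : Integrable (fun q => ∏ s : Fin ℓ, G s (q.1, q.2 s)) (ν.prod (Measure.pi fun _ => m))) :
    ∫ q, ∏ s : Fin ℓ, G s (q.1, q.2 s) ∂(ν.prod (Measure.pi fun _ => m))
      = ∫ w, ∏ s, ∫ u, G s (w, u) ∂m ∂ν := by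
  rw [integral_prod _ hG]
  congr with w
  exact integral_fintype_prod_eq_prod (E := fun _ => Y) fun s u => G s (w, u)

theorem integral_prod_fiber_pow_nonneg (hev : Even ℓ) (G : W × Y → ℝ) :
    0 ≤ ∫ q, ∏ v : Fin ℓ, G (q.1, q.2 v) ∂(ν.prod (Measure.pi fun _ => m)) := by
  by_cases hG : Integrable (fun q => ∏ v : Fin ℓ, G (q.1, q.2 v)) (ν.prod (Measure.pi fun _ => m))
  · rw [integral_prod_fiber (fun _ => G) hG]
    exact integral_nonneg fun w => by simpa using hev.pow_nonneg _
  · rw [integral_undef hG]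

theorem abs_integral_prod_fiber_le (hℓ : 0 < ℓ) (hev : Even ℓ) (G : Fin ℓ → W × Y → ℝ)
    (hG : ∀ s, StronglyMeasurable (G s))
    (hGi : ∀ s, Integrable (fun q => ∏ v : Fin ℓ, G s (q.1, q.2 v))
      (ν.prod (Measure.pi fun _ => m))) :
    |∫ q, ∏ s : Fin ℓ, G s (q.1, q.2 s) ∂(ν.prod (Measure.pi fun _ => m))|
      ≤ ∏ s, (∫ q, ∏ v : Fin ℓ, G s (q.1, q.2 v) ∂(ν.prod (Measure.pi fun _ => m)))
          ^ ((ℓ : ℝ)⁻¹) := by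
  have : Nonempty (Fin ℓ) := ⟨⟨0, hℓ⟩⟩
  by_cases hmain : Integrable (fun q => ∏ s : Fin ℓ, G s (q.1, q.2 s))
    (ν.prod (Measure.pi fun _ => m))
  · have hpow : ∀ s, ∫ q, ∏ v : Fin ℓ, G s (q.1, q.2 v) ∂(ν.prod (Measure.pi fun _ => m))
        = ∫ w, (∫ u, G s (w, u) ∂m) ^ ℓ ∂ν := fun s => by
      simpa using integral_prod_fiber (fun _ => G s) (hGi s)
    have hpowi : ∀ s, Integrable (fun w => (∫ u, G s (w, u) ∂m) ^ ℓ) ν := fun s => by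
      refine (hGi s).integral_prod_left.congr (ae_of_all _ fun w => ?_)
      simpa using integral_fintype_prod_eq_pow (ι := Fin ℓ) (fun u => G s (w, u)) (μ := m)
    simp only [integral_prod_fiber G hmain, hpow]
    simpa using abs_integral_prod_le_prod_integral_pow (f := fun s w => ∫ u, G s (w, u) ∂m)
      (by simpa using hev)
      (fun s => ((hG s).integral_prod_right' (ν := m)).aestronglyMeasurable (μ := ν))
      (by simpa using hpowi)
  · rw [integral_undef hmain, abs_zero]
    exact prod_nonneg fun s _ => Real.rpow_nonneg (integral_prod_fiber_pow_nonneg hev _) _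

end Fiber

section Cube

variable {ι : Type*} [DecidableEq ι] {X : ι → Type*} {ℓ : ℕ} {Z M : Type*} [CommMonoid M]

theorem cubePoint_funSplitAt_symm (j : ι) (x : ∀ i, Fin ℓ → X i) (s : Fin ℓ)
    (ω : {i // i ≠ j} → Fin ℓ) :
    (fun i => x i ((Equiv.funSplitAt j (Fin ℓ)).symm (s, ω) i))
      = (Equiv.piSplitAt j X).symm (x j s, fun i => x i (ω i)) := by
  funext i
  by_cases h : i = j
  · subst h
    simp
  · simp [h]

variable [Fintype ι]

/-- `(z, x) ↦ ∏ ω, F ω (z, x⁽ω⁾)`: the integrand of the Gowers inner product of the family `F`,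
in which all the functions may also depend on a spectator variable `z`. -/
def cubeProd (F : (ι → Fin ℓ) → Z × (∀ i, X i) → M) (p : Z × ∀ i, Fin ℓ → X i) : M :=
  ∏ ω, F ω (p.1, fun i => p.2 i (ω i))

variable (j : ι)

/-- The factors of `cubeProd` at the vertices with a fixed `j`-th coordinate, as a function of a
point of the cube over the other coordinates and of a point of `X j`. -/
def fiberProd (H : ({i // i ≠ j} → Fin ℓ) → Z × (∀ i, X i) → M)
    (q : (Z × ∀ i : {i // i ≠ j}, Fin ℓ → X i) × X j) : M :=
  ∏ ω, H ω (q.1.1, (Equiv.piSplitAt j X).symm (q.2, fun i => q.1.2 i (ω i)))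

/-- The product of `H` over `ℓ` copies of the `j`-th coordinate, these copies being part of the
spectator. -/
def copiesProd (H : Z × (∀ i, X i) → M)
    (q : (Z × (Fin ℓ → X j)) × ∀ i : {i // i ≠ j}, X i) : M :=
  ∏ v, H (q.1.1, (Equiv.piSplitAt j X).symm (q.1.2 v, q.2))

theorem prod_funSplitAt (g : (ι → Fin ℓ) → M) :
    ∏ ω, g ω = ∏ s, ∏ ω, g ((Equiv.funSplitAt j (Fin ℓ)).symm (s, ω)) := by
  rw [← (Equiv.funSplitAt j (Fin ℓ)).symm.prod_comp, Fintype.prod_prod_type]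

theorem cubeProd_eq_prod_fiberProd (F : (ι → Fin ℓ) → Z × (∀ i, X i) → M)
    (p : Z × ∀ i, Fin ℓ → X i) :
    cubeProd F p = ∏ s, fiberProd j (fun ω => F ((Equiv.funSplitAt j (Fin ℓ)).symm (s, ω)))
      ((p.1, fun i => p.2 i), p.2 j s) := by
  simp only [cubeProd, prod_funSplitAt j, fiberProd, cubePoint_funSplitAt_symm]

theorem prod_fiberProd_eq_cubeProd_copiesProd
    (H : ({i // i ≠ j} → Fin ℓ) → Z × (∀ i, X i) → M)
    (q : (Z × ∀ i : {i // i ≠ j}, Fin ℓ → X i) × (Fin ℓ → X j)) :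
    ∏ v, fiberProd j H (q.1, q.2 v)
      = cubeProd (fun ω => copiesProd (ℓ := ℓ) j (H ω)) ((q.1.1, q.2), q.1.2) := by
  simp only [fiberProd, cubeProd, copiesProd]
  exact Finset.prod_comm

end Cube

section CubeMeasure

variable {ι : Type*} [Fintype ι] [DecidableEq ι] {X : ι → Type*} [∀ i, MeasurableSpace (X i)]
  {ℓ : ℕ} {Z : Type*} [MeasurableSpace Z]

noncomputable abbrev cubeMeasure (μ : ∀ i, Measure (X i)) (ℓ : ℕ) :
    Measure (∀ i, Fin ℓ → X i) :=
  Measure.pi fun i => Measure.pi fun _ : Fin ℓ => μ i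

variable (j : ι)

section Measurability

variable {M : Type*} [CommMonoid M] [MeasurableSpace M] [MeasurableMul₂ M]

theorem measurable_fiberProd {H : ({i // i ≠ j} → Fin ℓ) → Z × (∀ i, X i) → M}
    (hH : ∀ ω, Measurable (H ω)) : Measurable (fiberProd j H) := by
  unfold fiberProd
  rw [← MeasurableEquiv.coe_piSplitAt_symm]
  fun_prop

omit [Fintype ι] in
theorem measurable_copiesProd {H : Z × (∀ i, X i) → M} (hH : Measurable H) :
    Measurable (copiesProd (ℓ := ℓ) j H) := by
  unfold copiesProd
  rw [← MeasurableEquiv.coe_piSplitAt_symm]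
  fun_prop

end Measurability

def cubeSplit : Z × (∀ i, Fin ℓ → X i) ≃ᵐ
    (Z × ∀ i : {i // i ≠ j}, Fin ℓ → X i) × (Fin ℓ → X j) :=
  (MeasurableEquiv.prodCongr (.refl Z)
    ((MeasurableEquiv.piSplitAt j _).trans .prodComm)).trans MeasurableEquiv.prodAssoc.symm

def spectatorSwap : (Z × ∀ i : {i // i ≠ j}, Fin ℓ → X i) × (Fin ℓ → X j) ≃ᵐ
    (Z × (Fin ℓ → X j)) × ∀ i : {i // i ≠ j}, Fin ℓ → X i :=
  MeasurableEquiv.prodAssoc.trans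
    ((MeasurableEquiv.prodCongr (.refl Z) .prodComm).trans MeasurableEquiv.prodAssoc.symm)

variable (μ : ∀ i, Measure (X i)) [∀ i, SigmaFinite (μ i)] (ζ : Measure Z) [SigmaFinite ζ]

theorem measurePreserving_cubeSplit :
    MeasurePreserving (cubeSplit (Z := Z) (ℓ := ℓ) j) (ζ.prod (cubeMeasure μ ℓ))
      ((ζ.prod (cubeMeasure (fun i : {i // i ≠ j} => μ i) ℓ)).prod
        (Measure.pi fun _ => μ j)) :=
  (measurePreserving_prodAssoc _ _ _).symm.comp
    ((MeasurePreserving.id ζ).prod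
      (Measure.measurePreserving_swap.comp (measurePreserving_piSplitAt _ j)))

theorem measurePreserving_spectatorSwap :
    MeasurePreserving (spectatorSwap (Z := Z) (ℓ := ℓ) j)
      ((ζ.prod (cubeMeasure (fun i : {i // i ≠ j} => μ i) ℓ)).prod (Measure.pi fun _ => μ j))
      ((ζ.prod (Measure.pi fun _ => μ j)).prod
        (cubeMeasure (fun i : {i // i ≠ j} => μ i) ℓ)) :=
  (measurePreserving_prodAssoc _ _ _).symm.comp
    (((MeasurePreserving.id ζ).prod Measure.measurePreserving_swap).comp
      (measurePreserving_prodAssoc _ _ _))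

theorem lintegral_cubeProd_eq (F : (ι → Fin ℓ) → Z × (∀ i, X i) → ℝ≥0∞) :
    ∫⁻ p, cubeProd F p ∂(ζ.prod (cubeMeasure μ ℓ))
      = ∫⁻ q, ∏ s, fiberProd j (fun ω => F ((Equiv.funSplitAt j (Fin ℓ)).symm (s, ω)))
          (q.1, q.2 s)
          ∂((ζ.prod (cubeMeasure (fun i : {i // i ≠ j} => μ i) ℓ)).prod
            (Measure.pi fun _ => μ j)) := by
  rw [← (measurePreserving_cubeSplit j μ ζ).lintegral_comp_emb
    (MeasurableEquiv.measurableEmbedding _)]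
  exact lintegral_congr (cubeProd_eq_prod_fiberProd j F)

theorem integral_cubeProd_eq (F : (ι → Fin ℓ) → Z × (∀ i, X i) → ℝ) :
    ∫ p, cubeProd F p ∂(ζ.prod (cubeMeasure μ ℓ))
      = ∫ q, ∏ s, fiberProd j (fun ω => F ((Equiv.funSplitAt j (Fin ℓ)).symm (s, ω)))
          (q.1, q.2 s)
          ∂((ζ.prod (cubeMeasure (fun i : {i // i ≠ j} => μ i) ℓ)).prod
            (Measure.pi fun _ => μ j)) := by
  rw [← (measurePreserving_cubeSplit j μ ζ).integral_comp']
  exact integral_congr_ae (ae_of_all _ (cubeProd_eq_prod_fiberProd j F))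

theorem integrable_cubeProd_iff (F : (ι → Fin ℓ) → Z × (∀ i, X i) → ℝ) :
    Integrable (cubeProd F) (ζ.prod (cubeMeasure μ ℓ))
      ↔ Integrable (fun q => ∏ s, fiberProd j
          (fun ω => F ((Equiv.funSplitAt j (Fin ℓ)).symm (s, ω))) (q.1, q.2 s))
          ((ζ.prod (cubeMeasure (fun i : {i // i ≠ j} => μ i) ℓ)).prod
            (Measure.pi fun _ => μ j)) := by
  rw [← (measurePreserving_cubeSplit j μ ζ).integrable_comp_emb
    (MeasurableEquiv.measurableEmbedding _)]
  exact integrable_congr (ae_of_all _ (cubeProd_eq_prod_fiberProd j F))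

theorem lintegral_prod_fiberProd_eq (H : ({i // i ≠ j} → Fin ℓ) → Z × (∀ i, X i) → ℝ≥0∞) :
    ∫⁻ q, ∏ v : Fin ℓ, fiberProd j H (q.1, q.2 v)
        ∂((ζ.prod (cubeMeasure (fun i : {i // i ≠ j} => μ i) ℓ)).prod (Measure.pi fun _ => μ j))
      = ∫⁻ p, cubeProd (fun ω => copiesProd (ℓ := ℓ) j (H ω)) p
          ∂((ζ.prod (Measure.pi fun _ => μ j)).prod
            (cubeMeasure (fun i : {i // i ≠ j} => μ i) ℓ)) := by
  rw [← (measurePreserving_spectatorSwap j μ ζ).lintegral_comp_emb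
    (MeasurableEquiv.measurableEmbedding _)]
  exact lintegral_congr (prod_fiberProd_eq_cubeProd_copiesProd j H)

theorem integral_prod_fiberProd_eq (H : ({i // i ≠ j} → Fin ℓ) → Z × (∀ i, X i) → ℝ) :
    ∫ q, ∏ v : Fin ℓ, fiberProd j H (q.1, q.2 v)
        ∂((ζ.prod (cubeMeasure (fun i : {i // i ≠ j} => μ i) ℓ)).prod (Measure.pi fun _ => μ j))
      = ∫ p, cubeProd (fun ω => copiesProd (ℓ := ℓ) j (H ω)) p
          ∂((ζ.prod (Measure.pi fun _ => μ j)).prod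
            (cubeMeasure (fun i : {i // i ≠ j} => μ i) ℓ)) := by
  rw [← (measurePreserving_spectatorSwap j μ ζ).integral_comp']
  exact integral_congr_ae (ae_of_all _ (prod_fiberProd_eq_cubeProd_copiesProd j H))

theorem integrable_prod_fiberProd_iff (H : ({i // i ≠ j} → Fin ℓ) → Z × (∀ i, X i) → ℝ) :
    Integrable (fun q => ∏ v : Fin ℓ, fiberProd j H (q.1, q.2 v))
        ((ζ.prod (cubeMeasure (fun i : {i // i ≠ j} => μ i) ℓ)).prod (Measure.pi fun _ => μ j))
      ↔ Integrable (cubeProd fun ω => copiesProd (ℓ := ℓ) j (H ω))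
          ((ζ.prod (Measure.pi fun _ => μ j)).prod
            (cubeMeasure (fun i : {i // i ≠ j} => μ i) ℓ)) := by
  rw [← (measurePreserving_spectatorSwap j μ ζ).integrable_comp_emb
    (MeasurableEquiv.measurableEmbedding _)]
  exact integrable_congr (ae_of_all _ (prod_fiberProd_eq_cubeProd_copiesProd j H))

theorem lintegral_cubeProd_const (H : Z × (∀ i, X i) → ℝ≥0∞) :
    ∫⁻ p, cubeProd (fun _ => H) p ∂(ζ.prod (cubeMeasure μ ℓ))
      = ∫⁻ p, cubeProd (fun _ : {i // i ≠ j} → Fin ℓ => copiesProd (ℓ := ℓ) j H) p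
          ∂((ζ.prod (Measure.pi fun _ => μ j)).prod
            (cubeMeasure (fun i : {i // i ≠ j} => μ i) ℓ)) :=
  (lintegral_cubeProd_eq j μ ζ _).trans (lintegral_prod_fiberProd_eq j μ ζ _)

theorem integral_cubeProd_const (H : Z × (∀ i, X i) → ℝ) :
    ∫ p, cubeProd (fun _ => H) p ∂(ζ.prod (cubeMeasure μ ℓ))
      = ∫ p, cubeProd (fun _ : {i // i ≠ j} → Fin ℓ => copiesProd (ℓ := ℓ) j H) p
          ∂((ζ.prod (Measure.pi fun _ => μ j)).prod
            (cubeMeasure (fun i : {i // i ≠ j} => μ i) ℓ)) :=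
  (integral_cubeProd_eq j μ ζ _).trans (integral_prod_fiberProd_eq j μ ζ _)

omit j in
theorem integral_cubeProd_const_nonneg [Nonempty ι] (hev : Even ℓ) (H : Z × (∀ i, X i) → ℝ) :
    0 ≤ ∫ p, cubeProd (fun _ : ι → Fin ℓ => H) p ∂(ζ.prod (cubeMeasure μ ℓ)) := by
  obtain ⟨j⟩ := ‹Nonempty ι›
  rw [integral_cubeProd_eq j μ ζ]
  exact integral_prod_fiber_pow_nonneg hev _

end CubeMeasure

section Spectator

-- The spectator lives in `Type (max v w)` so that the induction step can move copies of a
-- coordinate into it.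
variable {ι : Type u} [Fintype ι] [DecidableEq ι] {X : ι → Type v} [∀ i, MeasurableSpace (X i)]
  (μ : ∀ i, Measure (X i)) [∀ i, SigmaFinite (μ i)]
  {Z : Type (max v w)} [MeasurableSpace Z] (ζ : Measure Z) [SigmaFinite ζ] {ℓ : ℕ}

theorem lintegral_cubeProd_le (hℓ : 0 < ℓ) (F : (ι → Fin ℓ) → Z × (∀ i, X i) → ℝ≥0∞)
    (hF : ∀ ω, Measurable (F ω)) :
    ∫⁻ p, cubeProd F p ∂(ζ.prod (cubeMeasure μ ℓ))
      ≤ ∏ ω, (∫⁻ p, cubeProd (fun _ => F ω) p ∂(ζ.prod (cubeMeasure μ ℓ)))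
          ^ (((ℓ : ℝ) ^ Fintype.card ι)⁻¹) := by
  induction hn : Fintype.card ι generalizing ι Z with
  | zero =>
    have : IsEmpty ι := Fintype.card_eq_zero_iff.1 hn
    simp [cubeProd]
  | succ n ih =>
    obtain ⟨j⟩ : Nonempty ι := Fintype.card_pos_iff.1 (by omega)
    have hκ : Fintype.card {i // i ≠ j} = n := by simp [Fintype.card_subtype_compl, hn]
    set σ := Equiv.funSplitAt j (Fin ℓ)
    set ν := (ζ.prod (cubeMeasure (fun i : {i // i ≠ j} => μ i) ℓ)).prod
      (Measure.pi fun _ : Fin ℓ => μ j)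
    set ν' := (ζ.prod (Measure.pi fun _ : Fin ℓ => μ j)).prod
      (cubeMeasure (fun i : {i // i ≠ j} => μ i) ℓ)
    calc ∫⁻ p, cubeProd F p ∂(ζ.prod (cubeMeasure μ ℓ))
        = ∫⁻ q, ∏ s, fiberProd j (fun ω => F (σ.symm (s, ω))) (q.1, q.2 s) ∂ν :=
          lintegral_cubeProd_eq j μ ζ F
      _ ≤ ∏ s, (∫⁻ q, ∏ v : Fin ℓ, fiberProd j (fun ω => F (σ.symm (s, ω))) (q.1, q.2 v) ∂ν)
            ^ ((ℓ : ℝ)⁻¹) :=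
          lintegral_prod_fiber_le hℓ _ fun s => measurable_fiberProd j fun ω => hF _
      _ = ∏ s, (∫⁻ p, cubeProd (fun ω => copiesProd (ℓ := ℓ) j (F (σ.symm (s, ω)))) p ∂ν')
            ^ ((ℓ : ℝ)⁻¹) := by
          simp only [ν, ν', lintegral_prod_fiberProd_eq]
      _ ≤ ∏ s, (∏ ω, (∫⁻ p, cubeProd (fun _ => copiesProd (ℓ := ℓ) j (F (σ.symm (s, ω)))) p ∂ν')
            ^ (((ℓ : ℝ) ^ n)⁻¹)) ^ ((ℓ : ℝ)⁻¹) := by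
          gcongr with s
          exact ih (fun i : {i // i ≠ j} => μ i) (ζ.prod (Measure.pi fun _ => μ j)) _
            (fun ω => measurable_copiesProd j (hF _)) hκ
      _ = ∏ ω, (∫⁻ p, cubeProd (fun _ => F ω) p ∂(ζ.prod (cubeMeasure μ ℓ)))
          ^ (((ℓ : ℝ) ^ (n + 1))⁻¹) := by
          rw [prod_funSplitAt j]
          refine prod_congr rfl fun s _ => ?_
          rw [← ENNReal.prod_rpow_of_nonneg (by positivity)]
          refine prod_congr rfl fun ω _ => ?_
          rw [lintegral_cubeProd_const j μ ζ, ← ENNReal.rpow_mul, pow_succ, mul_inv]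

theorem abs_integral_cubeProd_le (hℓ : 0 < ℓ) (hev : Even ℓ)
    (F : (ι → Fin ℓ) → Z × (∀ i, X i) → ℝ) (hF : ∀ ω, Measurable (F ω))
    (hFi : ∀ K : (ι → Fin ℓ) → ι → Fin ℓ,
      Integrable (cubeProd fun ω => F (K ω)) (ζ.prod (cubeMeasure μ ℓ))) :
    |∫ p, cubeProd F p ∂(ζ.prod (cubeMeasure μ ℓ))|
      ≤ ∏ ω, |∫ p, cubeProd (fun _ => F ω) p ∂(ζ.prod (cubeMeasure μ ℓ))|
          ^ (((ℓ : ℝ) ^ Fintype.card ι)⁻¹) := by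
  induction hn : Fintype.card ι generalizing ι Z with
  | zero =>
    have : IsEmpty ι := Fintype.card_eq_zero_iff.1 hn
    simp [cubeProd]
  | succ n ih =>
    obtain ⟨j⟩ : Nonempty ι := Fintype.card_pos_iff.1 (by omega)
    have hκ : Fintype.card {i // i ≠ j} = n := by simp [Fintype.card_subtype_compl, hn]
    set σ := Equiv.funSplitAt j (Fin ℓ)
    set ν := (ζ.prod (cubeMeasure (fun i : {i // i ≠ j} => μ i) ℓ)).prod
      (Measure.pi fun _ : Fin ℓ => μ j)
    set ν' := (ζ.prod (Measure.pi fun _ : Fin ℓ => μ j)).prod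
      (cubeMeasure (fun i : {i // i ≠ j} => μ i) ℓ)
    have hfib : ∀ s (K : ({i // i ≠ j} → Fin ℓ) → {i // i ≠ j} → Fin ℓ),
        Integrable (fun q => ∏ v : Fin ℓ,
          fiberProd j (fun ω => F (σ.symm (s, K ω))) (q.1, q.2 v)) ν := by
      intro s K
      simpa [σ] using (integrable_cubeProd_iff j μ ζ _).1 (hFi fun ω => σ.symm (s, K (σ ω).2))
    have hnonneg : ∀ s, 0 ≤ ∫ q, ∏ v : Fin ℓ,
        fiberProd j (fun ω => F (σ.symm (s, ω))) (q.1, q.2 v) ∂ν :=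
      fun s => integral_prod_fiber_pow_nonneg hev _
    calc |∫ p, cubeProd F p ∂(ζ.prod (cubeMeasure μ ℓ))|
        = |∫ q, ∏ s, fiberProd j (fun ω => F (σ.symm (s, ω))) (q.1, q.2 s) ∂ν| := by
          rw [integral_cubeProd_eq j μ ζ F]
      _ ≤ ∏ s, (∫ q, ∏ v : Fin ℓ, fiberProd j (fun ω => F (σ.symm (s, ω))) (q.1, q.2 v) ∂ν)
            ^ ((ℓ : ℝ)⁻¹) :=
          abs_integral_prod_fiber_le hℓ hev _
            (fun s => (measurable_fiberProd j fun ω => hF _).stronglyMeasurable)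
            (fun s => hfib s id)
      _ ≤ ∏ s, (∏ ω, |∫ p, cubeProd (fun _ => copiesProd (ℓ := ℓ) j (F (σ.symm (s, ω)))) p ∂ν'|
            ^ (((ℓ : ℝ) ^ n)⁻¹)) ^ ((ℓ : ℝ)⁻¹) := by
          refine prod_le_prod (fun s _ => Real.rpow_nonneg (hnonneg s) _) fun s _ => ?_
          refine Real.rpow_le_rpow (hnonneg s) ?_ (by positivity)
          rw [integral_prod_fiberProd_eq j μ ζ]
          exact (le_abs_self _).trans (ih (fun i : {i // i ≠ j} => μ i)
            (ζ.prod (Measure.pi fun _ => μ j)) _ (fun ω => measurable_copiesProd j (hF _))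
            (fun K => (integrable_prod_fiberProd_iff j μ ζ _).1 (hfib s K)) hκ)
      _ = ∏ ω, |∫ p, cubeProd (fun _ => F ω) p ∂(ζ.prod (cubeMeasure μ ℓ))|
          ^ (((ℓ : ℝ) ^ (n + 1))⁻¹) := by
          rw [prod_funSplitAt j]
          refine prod_congr rfl fun s _ => ?_
          rw [← Real.finsetProd_rpow _ _ (fun ω _ => by positivity)]
          refine prod_congr rfl fun ω _ => ?_
          rw [integral_cubeProd_const j μ ζ, ← Real.rpow_mul (abs_nonneg _), pow_succ, mul_inv]

end Spectator

theorem measurePreserving_punitProd_symm {α : Type*} [MeasurableSpace α] (ν : Measure α)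
    [SFinite ν] :
    MeasurePreserving (MeasurableEquiv.punitProd (α := α)).symm ν
      ((Measure.dirac PUnit.unit).prod ν) :=
  ⟨MeasurableEquiv.measurable _, (Measure.dirac_prod _).symm⟩

section NoSpectator

variable {ι : Type u} [Fintype ι] [DecidableEq ι] {X : ι → Type v} [∀ i, MeasurableSpace (X i)]
  (μ : ∀ i, Measure (X i)) {ℓ : ℕ}

theorem lintegral_prod_cube_le [∀ i, SigmaFinite (μ i)] (hℓ : 0 < ℓ)
    (F : (ι → Fin ℓ) → (∀ i, X i) → ℝ≥0∞) (hF : ∀ ω, Measurable (F ω)) :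
    ∫⁻ x : ∀ i, Fin ℓ → X i, ∏ ω, F ω (fun i => x i (ω i)) ∂(cubeMeasure μ ℓ)
      ≤ ∏ ω, (∫⁻ x : ∀ i, Fin ℓ → X i, ∏ ω' : ι → Fin ℓ, F ω (fun i => x i (ω' i))
          ∂(cubeMeasure μ ℓ)) ^ (((ℓ : ℝ) ^ Fintype.card ι)⁻¹) := by
  have h := lintegral_cubeProd_le.{u, v, 0} μ (Measure.dirac PUnit.unit) hℓ
    (fun ω p => F ω p.2) fun ω => (hF ω).comp measurable_snd
  simp only [← (measurePreserving_punitProd_symm (cubeMeasure μ ℓ)).lintegral_comp_emb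
    (MeasurableEquiv.measurableEmbedding _)] at h
  exact h

theorem abs_integral_prod_cube_le [∀ i, SigmaFinite (μ i)] (hℓ : 0 < ℓ) (hev : Even ℓ)
    (F : (ι → Fin ℓ) → (∀ i, X i) → ℝ) (hF : ∀ ω, Measurable (F ω))
    (hFi : ∀ K : (ι → Fin ℓ) → ι → Fin ℓ,
      Integrable (fun x : ∀ i, Fin ℓ → X i => ∏ ω, F (K ω) (fun i => x i (ω i)))
        (cubeMeasure μ ℓ)) :
    |∫ x : ∀ i, Fin ℓ → X i, ∏ ω, F ω (fun i => x i (ω i)) ∂(cubeMeasure μ ℓ)|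
      ≤ ∏ ω, |∫ x : ∀ i, Fin ℓ → X i, ∏ ω' : ι → Fin ℓ, F ω (fun i => x i (ω' i))
          ∂(cubeMeasure μ ℓ)| ^ (((ℓ : ℝ) ^ Fintype.card ι)⁻¹) := by
  have hmp := measurePreserving_punitProd_symm (cubeMeasure μ ℓ)
  have h := abs_integral_cubeProd_le.{u, v, 0} μ (Measure.dirac PUnit.unit) hℓ hev
    (fun ω p => F ω p.2) (fun ω => (hF ω).comp measurable_snd)
    fun K => (hmp.integrable_comp_emb (MeasurableEquiv.measurableEmbedding _)).1 (hFi K)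
  simp only [← hmp.integral_comp'] at h
  exact h

theorem integral_prod_cube_nonneg [Nonempty ι] [∀ i, SigmaFinite (μ i)] (hev : Even ℓ)
    (H : (∀ i, X i) → ℝ) :
    0 ≤ ∫ x : ∀ i, Fin ℓ → X i, ∏ ω : ι → Fin ℓ, H (fun i => x i (ω i)) ∂(cubeMeasure μ ℓ) := by
  have h := integral_cubeProd_const_nonneg μ (Measure.dirac (PUnit.unit : PUnit.{v + 1})) hev
    fun p => H p.2
  simp only [← (measurePreserving_punitProd_symm (cubeMeasure μ ℓ)).integral_comp'] at h
  exact h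

omit [DecidableEq ι] in
theorem measurePreserving_cubePoint [∀ i, IsProbabilityMeasure (μ i)] (ω : ι → Fin ℓ) :
    MeasurePreserving (fun x : ∀ i, Fin ℓ → X i => fun i => x i (ω i)) (cubeMeasure μ ℓ)
      (Measure.pi μ) :=
  measurePreserving_pi _ _ fun i => measurePreserving_eval (fun _ => μ i) (ω i)

theorem prod_cubePoint_ae_eq [∀ i, IsProbabilityMeasure (μ i)]
    {f g : (ι → Fin ℓ) → (∀ i, X i) → ℝ} (hfg : ∀ ω, f ω =ᵐ[Measure.pi μ] g ω) :
    (fun x => ∏ ω, f ω (fun i => x i (ω i)))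
      =ᵐ[cubeMeasure μ ℓ] fun x => ∏ ω, g ω (fun i => x i (ω i)) := by
  have h : ∀ᵐ x ∂(cubeMeasure μ ℓ), ∀ ω,
      f ω (fun i => x i (ω i)) = g ω (fun i => x i (ω i)) :=
    ae_all_iff.2 fun ω =>
      (measurePreserving_cubePoint μ ω).quasiMeasurePreserving.ae_eq_comp (hfg ω)
  filter_upwards [h] with x hx
  exact prod_congr rfl fun ω _ => hx ω

theorem integrable_prod_cube [∀ i, SigmaFinite (μ i)] (hℓ : 0 < ℓ)
    {g : (ι → Fin ℓ) → (∀ i, X i) → ℝ} (hg : ∀ ω, Measurable (g ω))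
    (hbox : ∀ ω, Integrable (fun x : ∀ i, Fin ℓ → X i =>
      ∏ ω' : ι → Fin ℓ, g ω (fun i => x i (ω' i))) (cubeMeasure μ ℓ))
    (K : (ι → Fin ℓ) → ι → Fin ℓ) :
    Integrable (fun x : ∀ i, Fin ℓ → X i => ∏ ω, g (K ω) (fun i => x i (ω i)))
      (cubeMeasure μ ℓ) := by
  refine ⟨(by fun_prop : Measurable _).aestronglyMeasurable, ?_⟩
  rw [hasFiniteIntegral_iff_enorm]
  simp only [enorm_prod]
  refine (lintegral_prod_cube_le μ hℓ (fun ω y => ‖g (K ω) y‖ₑ) fun ω => (hg _).enorm).trans_lt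
    (ENNReal.prod_lt_top fun ω _ => ENNReal.rpow_lt_top_of_nonneg (by positivity) ?_)
  simpa only [enorm_prod] using (hasFiniteIntegral_iff_enorm.1 (hbox (K ω)).2).ne

end NoSpectator

theorem boxNormOn_univ {ι : Type*} [Fintype ι] [DecidableEq ι] {X : ι → Type*}
    [∀ i, MeasurableSpace (X i)] (μ : ∀ i, Measure (X i)) (ℓ : ℕ) (f : (∀ i, X i) → ℝ) :
    boxNormOn μ univ ℓ f = (∫ x, ∏ ω : ι → Fin ℓ, f (fun i => x i (ω i)) ∂(cubeMeasure μ ℓ))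
      ^ (((ℓ : ℝ) ^ Fintype.card ι)⁻¹) := by
  simp [boxNormOn]

theorem gowers_cauchy_schwarz_general {ι : Type*} [Fintype ι] [DecidableEq ι] [Nonempty ι]
    {X : ι → Type*} [∀ i, MeasurableSpace (X i)] (μ : ∀ i, Measure (X i))
    [∀ i, IsProbabilityMeasure (μ i)]
    (ℓ : ℕ) (hℓ : 2 ≤ ℓ) (hev : Even ℓ)
    (f : (ι → Fin ℓ) → (∀ i, X i) → ℝ)
    (hf : ∀ ω, Integrable (f ω) (Measure.pi μ))
    (hbox : ∀ ω : ι → Fin ℓ, Integrable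
      (fun x : ∀ i, Fin ℓ → X i => ∏ ω' : ι → Fin ℓ, f ω (fun i => x i (ω' i)))
      (Measure.pi fun i => Measure.pi fun _ : Fin ℓ => μ i)) :
    |∫ x : ∀ i, Fin ℓ → X i, ∏ ω : ι → Fin ℓ, f ω (fun i => x i (ω i))
        ∂(Measure.pi fun i => Measure.pi fun _ : Fin ℓ => μ i)| ≤
      ∏ ω : ι → Fin ℓ, boxNormOn μ Finset.univ ℓ (f ω) := by
  choose g hg hfg using fun ω => (hf ω).aestronglyMeasurable
  have hcube : ∀ K : (ι → Fin ℓ) → ι → Fin ℓ,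
      (fun x => ∏ ω, f (K ω) (fun i => x i (ω i)))
        =ᵐ[cubeMeasure μ ℓ] fun x => ∏ ω, g (K ω) (fun i => x i (ω i)) :=
    fun K => prod_cubePoint_ae_eq μ fun ω => hfg (K ω)
  have hgi := integrable_prod_cube μ (by omega) (fun ω => (hg ω).measurable)
    fun ω => (hbox ω).congr (hcube fun _ => ω)
  rw [integral_congr_ae (hcube fun ω => ω)]
  refine (abs_integral_prod_cube_le μ (by omega) hev g (fun ω => (hg ω).measurable) hgi).trans_eq
    (prod_congr rfl fun ω _ => ?_)
  rw [boxNormOn_univ, integral_congr_ae (hcube fun _ => ω),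
    abs_of_nonneg (integral_prod_cube_nonneg μ hev _)]

/-- Gowers–Cauchy–Schwarz inequality for the `ℓ`-box norms. -/
theorem gowers_cauchy_schwarz {ι : Type*} [Fintype ι] [DecidableEq ι] [Nonempty ι]
    {X : ι → Type*} [∀ i, MeasurableSpace (X i)] (μ : ∀ i, Measure (X i))
    [∀ i, IsProbabilityMeasure (μ i)]
    (ℓ : ℕ) (hℓ : 2 ≤ ℓ) (hev : Even ℓ)
    (f : (ι → Fin ℓ) → (∀ i, X i) → ℝ)
    (hf : ∀ ω, Integrable (f ω) (Measure.pi μ))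
    (hbox : ∀ ω : ι → Fin ℓ, Integrable
      (fun x : ∀ i, Fin ℓ → X i => ∏ ω' : ι → Fin ℓ, f ω (fun i => x i (ω' i)))
      (Measure.pi fun i => Measure.pi fun _ : Fin ℓ => μ i))
    (hint : Integrable
      (fun x : ∀ i, Fin ℓ → X i => ∏ ω : ι → Fin ℓ, f ω (fun i => x i (ω i)))
      (Measure.pi fun i => Measure.pi fun _ : Fin ℓ => μ i)) :
    |∫ x : ∀ i, Fin ℓ → X i, ∏ ω : ι → Fin ℓ, f ω (fun i => x i (ω i))
        ∂(Measure.pi fun i => Measure.pi fun _ : Fin ℓ => μ i)| ≤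
      ∏ ω : ι → Fin ℓ, boxNormOn μ Finset.univ ℓ (f ω) :=
  gowers_cauchy_schwarz_general μ ℓ hℓ hev f hf hbox
end

section
/- The (ℓ,p)-box norm dominates the L_p norm: for every nonempty finite index set e, even integer ℓ ≥ 2, 1 ≤ p < ∞, and f ∈ L_p(X_e), one has ‖f‖_{L_p(X_e)} ≤ ‖f‖_{□_{ℓ,p}(X_e)}. -/
open MeasureTheory Finset

/-- The `(ℓ,p)`-box norm, `‖f‖_{□_{ℓ,p}} = ‖|f|^p‖_{□_ℓ}^{1/p}`. -/
noncomputable def pBoxNormOn {ι : Type*} [Fintype ι] [DecidableEq ι] {X : ι → Type*}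
    [∀ i, MeasurableSpace (X i)] (μ : ∀ i, Measure (X i))
    (e : Finset ι) (ℓ : ℕ) (p : ℝ) (f : (∀ i, X i) → ℝ) : ℝ :=
  (boxNormOn μ e ℓ (fun x => |f x| ^ p)) ^ p⁻¹

/-!
Write `x^ω := fun i => x i (ω i)` for `x : ∀ i, Fin ℓ → X i` and `ω : ι → Fin ℓ`. We show
`(∫ g)^(ℓ^#s) ≤ ∫ ∏_ω g(x^ω)` for every `g ≥ 0`, the product running over the `ω` vanishing off `s`,
by induction on `s`. Adding a coordinate `a ∉ s`: once the coordinates other than `a` are frozen,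
the box integrand over `insert a s` factors as `∏ j, K(y j)` in the `ℓ` copies `y` of the `a`-th
variable, so its slice integral is `(∫ K)^ℓ`, while the box integrand over `s` only sees `y 0`
and has slice integral `∫ K`. Jensen's inequality `(∫ G)^ℓ ≤ ∫ G^ℓ` in the remaining variables
closes the induction. Taking `s = univ` and `g = |f|^p` gives the theorem.
-/

open Function
open scoped ENNReal

theorem pow_lintegral_le_lintegral_pow {α : Type*} [MeasurableSpace α] {ν : Measure α}
    [IsProbabilityMeasure ν] {G : α → ℝ≥0∞} (hG : AEMeasurable G ν) (n : ℕ) :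
    (∫⁻ x, G x ∂ν) ^ n ≤ ∫⁻ x, G x ^ n ∂ν := by
  rcases Nat.eq_zero_or_pos n with rfl | hn
  · simp
  have h := eLpNorm'_le_eLpNorm'_of_exponent_le one_pos (Nat.one_le_cast.2 hn) ν
    hG.aestronglyMeasurable
  simp only [eLpNorm', enorm_eq_self, ENNReal.rpow_one, div_one, one_div] at h
  have hn' : (n : ℝ) ≠ 0 := by positivity
  calc (∫⁻ x, G x ∂ν) ^ n ≤ ((∫⁻ x, G x ^ (n : ℝ) ∂ν) ^ (n : ℝ)⁻¹) ^ n := by gcongr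
    _ = ∫⁻ x, G x ^ n ∂ν := by
      simp_rw [← ENNReal.rpow_natCast, ← ENNReal.rpow_mul, inv_mul_cancel₀ hn', ENNReal.rpow_one]

section Pi

variable {ι : Type*} [Fintype ι] {X : ι → Type*} [∀ i, MeasurableSpace (X i)]
  {μ : ∀ i, Measure (X i)} [∀ i, IsProbabilityMeasure (μ i)]

theorem lintegral_pi_prod_eq_prod_lintegral {H : ∀ i, X i → ℝ≥0∞} (hH : ∀ i, Measurable (H i)) :
    ∫⁻ x, ∏ i, H i (x i) ∂Measure.pi μ = ∏ i, ∫⁻ t, H i t ∂μ i := by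
  rw [ProbabilityTheory.lintegral_prod_eq_prod_lintegral_of_indepFun _ _
    (ProbabilityTheory.iIndepFun_pi fun i => (hH i).aemeasurable)
    fun i => (hH i).comp (measurable_pi_apply i)]
  exact prod_congr rfl fun i _ => (measurePreserving_eval μ i).lintegral_comp (hH i)

variable [DecidableEq ι]

theorem lintegral_pi_eq_lintegral_lintegral_update {f : (∀ i, X i) → ℝ≥0∞} (hf : Measurable f)
    (a : ι) :
    ∫⁻ x, f x ∂Measure.pi μ = ∫⁻ x, ∫⁻ t, f (update x a t) ∂μ a ∂Measure.pi μ := by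
  have h_idem : ∫⋯∫⁻_{a}, (∫⋯∫⁻_{a}, f ∂μ) ∂μ = ∫⋯∫⁻_{a}, f ∂μ := by
    ext x
    simp [lmarginal_singleton (∫⋯∫⁻_{a}, f ∂μ), lmarginal_update_of_mem μ (mem_singleton_self a)]
  rw [← lmarginal_singleton]
  exact lintegral_eq_of_lmarginal_eq {a} hf (hf.lmarginal μ) h_idem.symm

end Pi

section Box

variable {ι : Type*} [DecidableEq ι]

theorem diag_update_update {X : ι → Type*} {ℓ : ℕ} (x : ∀ i, Fin ℓ → X i) (a : ι)
    (y : Fin ℓ → X a) (ω : ι → Fin ℓ) (j : Fin ℓ) :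
    (fun i => update x a y i (update ω a j i)) = update (fun i => x i (ω i)) a (y j) := by
  ext i
  rcases eq_or_ne i a with rfl | h <;> simp [*]

variable [Fintype ι]

-- The index set of `boxNormOn` verbatim, so that it can be folded back there.
def boxIndices (ℓ : ℕ) (s : Finset ι) : Finset (ι → Fin ℓ) :=
  univ.filter fun ω => ∀ i ∉ s, (ω i : ℕ) = 0

theorem boxIndices_univ (ℓ : ℕ) : boxIndices ℓ (univ : Finset ι) = univ := by
  simp [boxIndices]

variable {ℓ : ℕ} [NeZero ℓ]

theorem mem_boxIndices {s : Finset ι} {ω : ι → Fin ℓ} :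
    ω ∈ boxIndices ℓ s ↔ ∀ i ∉ s, ω i = 0 := by
  simp [boxIndices, Fin.val_eq_zero_iff]

theorem boxIndices_empty : boxIndices ℓ (∅ : Finset ι) = {0} := by
  ext ω
  simp [mem_boxIndices, funext_iff]

theorem prod_boxIndices_insert {M : Type*} [CommMonoid M] {s : Finset ι} {a : ι} (ha : a ∉ s)
    (G : (ι → Fin ℓ) → M) :
    ∏ ω ∈ boxIndices ℓ (insert a s), G ω = ∏ j, ∏ ω ∈ boxIndices ℓ s, G (update ω a j) := by
  rw [← prod_product']
  refine prod_nbij' (fun ω => (ω a, update ω a 0)) (fun p => update p.2 a p.1) ?_ ?_ ?_ ?_ ?_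
  · intro ω hω
    simp only [mem_product, mem_univ, true_and, mem_boxIndices] at hω ⊢
    intro i hi
    rcases eq_or_ne i a with rfl | hia
    · simp
    · simpa [hia] using hω i (by simp [hia, hi])
  · rintro ⟨j, ω⟩ hω
    simp only [mem_product, mem_univ, true_and, mem_boxIndices] at hω ⊢
    intro i hi
    rw [mem_insert, not_or] at hi
    simpa [hi.1] using hω i hi.2
  · intro ω _
    simp
  · rintro ⟨j, ω⟩ hω
    simp only [mem_product, mem_univ, true_and, mem_boxIndices] at hω
    simp [← hω a ha]
  · intro ω _
    simp

variable {X : ι → Type*} [∀ i, MeasurableSpace (X i)] (μ : ∀ i, Measure (X i))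
  [∀ i, IsProbabilityMeasure (μ i)]

theorem pow_lintegral_box_le_lintegral_box_insert {g : (∀ i, X i) → ℝ≥0∞} (hg : Measurable g)
    {s : Finset ι} {a : ι} (ha : a ∉ s) :
    (∫⁻ x, ∏ ω ∈ boxIndices ℓ s, g (fun i => x i (ω i))
      ∂Measure.pi fun i => Measure.pi fun _ : Fin ℓ => μ i) ^ ℓ ≤
    ∫⁻ x, ∏ ω ∈ boxIndices ℓ (insert a s), g (fun i => x i (ω i))
      ∂Measure.pi fun i => Measure.pi fun _ : Fin ℓ => μ i := by
  set K : (∀ i, Fin ℓ → X i) → X a → ℝ≥0∞ :=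
    fun x t => ∏ ω ∈ boxIndices ℓ s, g (update (fun i => x i (ω i)) a t)
  have hK : Measurable (uncurry K) := by fun_prop
  have h_slice : ∀ (x : ∀ i, Fin ℓ → X i) (y : Fin ℓ → X a),
      ∏ ω ∈ boxIndices ℓ s, g (fun i => update x a y i (ω i)) = K x (y 0) := by
    refine fun x y => prod_congr rfl fun ω hω => ?_
    have hω : update ω a 0 = ω := update_eq_self_iff.2 (mem_boxIndices.1 hω a ha).symm
    rw [← diag_update_update x a y ω 0, hω]
  have h_slice_insert : ∀ (x : ∀ i, Fin ℓ → X i) (y : Fin ℓ → X a),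
      ∏ ω ∈ boxIndices ℓ (insert a s), g (fun i => update x a y i (ω i)) = ∏ j, K x (y j) := by
    intro x y
    simp only [prod_boxIndices_insert ha, diag_update_update, K]
  calc _ = (∫⁻ x, ∫⁻ t, K x t ∂μ a ∂Measure.pi fun i => Measure.pi fun _ : Fin ℓ => μ i) ^ ℓ := by
        rw [lintegral_pi_eq_lintegral_lintegral_update (by fun_prop) a]
        simp_rw [h_slice]
        congr! 3 with x
        exact (measurePreserving_eval _ 0).lintegral_comp hK.of_uncurry_left
    _ ≤ ∫⁻ x, (∫⁻ t, K x t ∂μ a) ^ ℓ ∂Measure.pi fun i => Measure.pi fun _ : Fin ℓ => μ i :=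
        pow_lintegral_le_lintegral_pow hK.lintegral_prod_right'.aemeasurable ℓ
    _ = _ := by
        conv_rhs => rw [lintegral_pi_eq_lintegral_lintegral_update (by fun_prop) a]
        simp_rw [h_slice_insert, lintegral_pi_prod_eq_prod_lintegral fun _ => hK.of_uncurry_left,
          prod_const, card_univ, Fintype.card_fin]

theorem pow_lintegral_le_lintegral_box (g : (∀ i, X i) → ℝ≥0∞) (s : Finset ι) :
    (∫⁻ y, g y ∂Measure.pi μ) ^ (ℓ ^ #s) ≤
    ∫⁻ x, ∏ ω ∈ boxIndices ℓ s, g (fun i => x i (ω i))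
      ∂Measure.pi fun i => Measure.pi fun _ : Fin ℓ => μ i := by
  obtain ⟨g₀, hg₀, hg₀_le, hg₀_eq⟩ := exists_measurable_le_lintegral_eq (Measure.pi μ) g
  rw [hg₀_eq]
  refine le_trans ?_ (lintegral_mono fun x => prod_le_prod' fun ω _ => hg₀_le _)
  induction s using Finset.induction_on with
  | empty =>
    simp only [boxIndices_empty, prod_singleton, card_empty, pow_zero, pow_one]
    exact ((measurePreserving_pi _ _ fun i => measurePreserving_eval _ 0).lintegral_comp hg₀).ge
  | insert a s ha ih =>
    rw [card_insert_of_notMem ha, pow_succ, pow_mul]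
    exact (pow_le_pow_left' ih ℓ).trans (pow_lintegral_box_le_lintegral_box_insert μ hg₀ ha)

theorem integral_pow_le_integral_box {h : (∀ i, X i) → ℝ} (h_nonneg : ∀ x, 0 ≤ h x)
    (hbox : Integrable (fun x : ∀ i, Fin ℓ → X i => ∏ ω : ι → Fin ℓ, h (fun i => x i (ω i)))
      (Measure.pi fun i => Measure.pi fun _ : Fin ℓ => μ i)) :
    (∫ y, h y ∂Measure.pi μ) ^ (ℓ ^ Fintype.card ι) ≤
    ∫ x, ∏ ω : ι → Fin ℓ, h (fun i => x i (ω i))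
      ∂Measure.pi fun i => Measure.pi fun _ : Fin ℓ => μ i := by
  have h_prod_nonneg : ∀ x : ∀ i, Fin ℓ → X i, 0 ≤ ∏ ω : ι → Fin ℓ, h (fun i => x i (ω i)) :=
    fun x => prod_nonneg fun ω _ => h_nonneg _
  rw [← ENNReal.ofReal_le_ofReal_iff (integral_nonneg h_prod_nonneg),
    ENNReal.ofReal_pow (integral_nonneg h_nonneg)]
  calc _ ≤ (∫⁻ y, ENNReal.ofReal (h y) ∂Measure.pi μ) ^ (ℓ ^ Fintype.card ι) := by
        gcongr
        rw [← Real.enorm_of_nonneg (integral_nonneg h_nonneg)]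
        exact (enorm_integral_le_lintegral_enorm _).trans_eq
          (lintegral_congr fun y => Real.enorm_of_nonneg (h_nonneg y))
    _ ≤ _ := by
        simpa only [card_univ, boxIndices_univ] using pow_lintegral_le_lintegral_box μ _ univ
    _ = _ := by
        rw [ofReal_integral_eq_lintegral_ofReal hbox (.of_forall h_prod_nonneg)]
        simp_rw [ENNReal.ofReal_prod_of_nonneg fun ω _ => h_nonneg _]

end Box

theorem Lp_le_pBoxNorm_general {ι : Type*} [Fintype ι] [DecidableEq ι]
    {X : ι → Type*} [∀ i, MeasurableSpace (X i)] (μ : ∀ i, Measure (X i))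
    [∀ i, IsProbabilityMeasure (μ i)]
    (ℓ : ℕ) (hℓ : 2 ≤ ℓ)
    (p : ℝ) (hp : 1 ≤ p)
    (f : (∀ i, X i) → ℝ)
    (hbox : Integrable
      (fun x : ∀ i, Fin ℓ → X i => ∏ ω : ι → Fin ℓ, |f (fun i => x i (ω i))| ^ p)
      (Measure.pi fun i => Measure.pi fun _ : Fin ℓ => μ i)) :
    (∫ x, |f x| ^ p ∂(Measure.pi μ)) ^ p⁻¹ ≤ pBoxNormOn μ Finset.univ ℓ p f := by
  have : NeZero ℓ := ⟨by omega⟩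
  have h_nonneg : ∀ x, 0 ≤ |f x| ^ p := fun x => by positivity
  have h_pow := integral_pow_le_integral_box μ h_nonneg hbox
  unfold pBoxNormOn boxNormOn
  rw [← boxIndices, boxIndices_univ, card_univ]
  refine Real.rpow_le_rpow (integral_nonneg h_nonneg) ?_ (by positivity)
  rw [Real.le_rpow_inv_iff_of_pos (integral_nonneg h_nonneg)
    (integral_nonneg fun x => prod_nonneg fun ω _ => h_nonneg _) (by positivity)]
  exact_mod_cast h_pow

/-- The `(ℓ,p)`-box norm dominates the `L_p` norm. -/
theorem Lp_le_pBoxNorm {ι : Type*} [Fintype ι] [DecidableEq ι] [Nonempty ι]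
    {X : ι → Type*} [∀ i, MeasurableSpace (X i)] (μ : ∀ i, Measure (X i))
    [∀ i, IsProbabilityMeasure (μ i)]
    (ℓ : ℕ) (hℓ : 2 ≤ ℓ) (hev : Even ℓ)
    (p : ℝ) (hp : 1 ≤ p)
    (f : (∀ i, X i) → ℝ)
    (hf : MemLp f (ENNReal.ofReal p) (Measure.pi μ))
    (hbox : Integrable
      (fun x : ∀ i, Fin ℓ → X i => ∏ ω : ι → Fin ℓ, |f (fun i => x i (ω i))| ^ p)
      (Measure.pi fun i => Measure.pi fun _ : Fin ℓ => μ i)) :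
    (∫ x, |f x| ^ p ∂(Measure.pi μ)) ^ p⁻¹ ≤ pBoxNormOn μ Finset.univ ℓ p f :=
  Lp_le_pBoxNorm_general μ ℓ hℓ p hp f hbox
end

section
/- Monotonicity of (ℓ,p)-box norms in p: for every nonempty finite index set e, even integer ℓ ≥ 2, exponents 1 ≤ p₁ ≤ p₂ < ∞, and f ∈ L_{p₂}(X_e), one has ‖f‖_{□_{ℓ,p₁}(X_e)} ≤ ‖f‖_{□_{ℓ,p₂}(X_e)}. -/
open MeasureTheory Finset

open scoped ENNReal

/-!
With `F x = ∏_ω |f(x^{(ω)})|`, the product over all vertices `ω` of the box, the `p`-th power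
commutes with the product, so `‖f‖_{□_{ℓ,p}} = ‖F‖_{L^p}^{1/ℓ^{|e|}}`. The claim is then
Lyapunov's inequality `‖F‖_{L^{p₁}} ≤ ‖F‖_{L^{p₂}}` on the probability space of box configurations.
-/

section Lyapunov

variable {α : Type*} [MeasurableSpace α] {ν : Measure α} {F : α → ℝ} {p q : ℝ}

theorem aestronglyMeasurable_of_integrable_rpow (hF : 0 ≤ F) (hq : 0 < q)
    (hFq : Integrable (fun x => F x ^ q) ν) : AEStronglyMeasurable F ν := by
  have h := (Real.continuous_rpow_const (inv_nonneg.2 hq.le)).comp_aestronglyMeasurable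
    hFq.aestronglyMeasurable
  convert h using 2 with x
  exact (Real.rpow_rpow_inv (hF x) hq.ne').symm

theorem integral_rpow_rpow_inv_le_of_exponent_le [IsProbabilityMeasure ν] (hF : 0 ≤ F)
    (hp : 0 < p) (hpq : p ≤ q) (hFq : Integrable (fun x => F x ^ q) ν) :
    (∫ x, F x ^ p ∂ν) ^ p⁻¹ ≤ (∫ x, F x ^ q ∂ν) ^ q⁻¹ := by
  have hq : 0 < q := hp.trans_le hpq
  have hmeas := aestronglyMeasurable_of_integrable_rpow hF hq hFq
  have hnorm : ∀ x, ‖F x‖ = F x := fun x => Real.norm_of_nonneg (hF x)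
  have hmemq : MemLp F (ENNReal.ofReal q) ν := by
    rw [← integrable_norm_rpow_iff hmeas (by simpa using hq) ENNReal.ofReal_ne_top,
      ENNReal.toReal_ofReal hq.le]
    simpa only [hnorm] using hFq
  have hmemp : MemLp F (ENNReal.ofReal p) ν :=
    hmemq.mono_exponent (ENNReal.ofReal_le_ofReal hpq)
  have hmono := eLpNorm_le_eLpNorm_of_exponent_le (ENNReal.ofReal_le_ofReal hpq) hmeas (μ := ν)
  rw [hmemp.eLpNorm_eq_integral_rpow_norm (by simpa using hp) ENNReal.ofReal_ne_top,
    hmemq.eLpNorm_eq_integral_rpow_norm (by simpa using hq) ENNReal.ofReal_ne_top,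
    ENNReal.toReal_ofReal hp.le, ENNReal.toReal_ofReal hq.le,
    ENNReal.ofReal_le_ofReal_iff (by positivity)] at hmono
  simpa only [hnorm] using hmono

end Lyapunov

section BoxProduct

variable {ι : Type*} [Fintype ι] [DecidableEq ι] {X : ι → Type*}

noncomputable def boxProdAbs (ℓ : ℕ) (f : (∀ i, X i) → ℝ) (x : ∀ i, Fin ℓ → X i) : ℝ :=
  ∏ ω : ι → Fin ℓ, |f (fun i => x i (ω i))|

theorem boxProdAbs_nonneg (ℓ : ℕ) (f : (∀ i, X i) → ℝ) : 0 ≤ boxProdAbs ℓ f := fun _ =>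
  prod_nonneg fun _ _ => abs_nonneg _

theorem boxProdAbs_rpow (ℓ : ℕ) (f : (∀ i, X i) → ℝ) (p : ℝ) (x : ∀ i, Fin ℓ → X i) :
    boxProdAbs ℓ f x ^ p = ∏ ω : ι → Fin ℓ, |f (fun i => x i (ω i))| ^ p :=
  (Real.finsetProd_rpow _ _ (fun _ _ => abs_nonneg _) p).symm

theorem pBoxNormOn_univ_eq [∀ i, MeasurableSpace (X i)]
    (μ : ∀ i, Measure (X i)) (ℓ : ℕ) (p : ℝ) (f : (∀ i, X i) → ℝ) :
    pBoxNormOn μ univ ℓ p f =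
      ((∫ x, boxProdAbs ℓ f x ^ p ∂(Measure.pi fun i => Measure.pi fun _ : Fin ℓ => μ i))
        ^ p⁻¹) ^ ((ℓ : ℝ) ^ Fintype.card ι)⁻¹ := by
  have hint : 0 ≤ ∫ x, boxProdAbs ℓ f x ^ p
      ∂(Measure.pi fun i => Measure.pi fun _ : Fin ℓ => μ i) :=
    integral_nonneg fun x => Real.rpow_nonneg (boxProdAbs_nonneg ℓ f x) p
  simp only [pBoxNormOn, boxNormOn, mem_univ, not_true_eq_false, IsEmpty.forall_iff,
    implies_true, filter_true, card_univ, ← boxProdAbs_rpow]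
  rw [← Real.rpow_mul hint, ← Real.rpow_mul hint, mul_comm]

end BoxProduct

theorem pBoxNorm_mono_p_general {ι : Type*} [Fintype ι] [DecidableEq ι]
    {X : ι → Type*} [∀ i, MeasurableSpace (X i)] (μ : ∀ i, Measure (X i))
    [∀ i, IsProbabilityMeasure (μ i)]
    (ℓ : ℕ)
    (p₁ p₂ : ℝ) (hp₁ : 1 ≤ p₁) (hp₁₂ : p₁ ≤ p₂)
    (f : (∀ i, X i) → ℝ)
    (hbox₂ : Integrable
      (fun x : ∀ i, Fin ℓ → X i => ∏ ω : ι → Fin ℓ, |f (fun i => x i (ω i))| ^ p₂)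
      (Measure.pi fun i => Measure.pi fun _ : Fin ℓ => μ i)) :
    pBoxNormOn μ Finset.univ ℓ p₁ f ≤ pBoxNormOn μ Finset.univ ℓ p₂ f := by
  have hF : Integrable (fun x => boxProdAbs ℓ f x ^ p₂)
      (Measure.pi fun i => Measure.pi fun _ : Fin ℓ => μ i) := by
    simpa only [boxProdAbs_rpow] using hbox₂
  rw [pBoxNormOn_univ_eq, pBoxNormOn_univ_eq]
  refine Real.rpow_le_rpow (Real.rpow_nonneg (integral_nonneg fun x =>
    Real.rpow_nonneg (boxProdAbs_nonneg ℓ f x) _) _) ?_ (by positivity)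
  exact integral_rpow_rpow_inv_le_of_exponent_le (boxProdAbs_nonneg ℓ f)
    (zero_lt_one.trans_le hp₁) hp₁₂ hF

/-- Monotonicity of the `(ℓ,p)`-box norms in `p`. -/
theorem pBoxNorm_mono_p {ι : Type*} [Fintype ι] [DecidableEq ι] [Nonempty ι]
    {X : ι → Type*} [∀ i, MeasurableSpace (X i)] (μ : ∀ i, Measure (X i))
    [∀ i, IsProbabilityMeasure (μ i)]
    (ℓ : ℕ) (hℓ : 2 ≤ ℓ) (hev : Even ℓ)
    (p₁ p₂ : ℝ) (hp₁ : 1 ≤ p₁) (hp₁₂ : p₁ ≤ p₂)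
    (f : (∀ i, X i) → ℝ)
    (hf : MemLp f (ENNReal.ofReal p₂) (Measure.pi μ))
    (hbox₁ : Integrable
      (fun x : ∀ i, Fin ℓ → X i => ∏ ω : ι → Fin ℓ, |f (fun i => x i (ω i))| ^ p₁)
      (Measure.pi fun i => Measure.pi fun _ : Fin ℓ => μ i))
    (hbox₂ : Integrable
      (fun x : ∀ i, Fin ℓ → X i => ∏ ω : ι → Fin ℓ, |f (fun i => x i (ω i))| ^ p₂)
      (Measure.pi fun i => Measure.pi fun _ : Fin ℓ => μ i)) :
    pBoxNormOn μ Finset.univ ℓ p₁ f ≤ pBoxNormOn μ Finset.univ ℓ p₂ f :=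
  pBoxNorm_mono_p_general μ ℓ p₁ p₂ hp₁ hp₁₂ f hbox₂
end

section
/- Hölder step in the proof of the generalized von Neumann theorem: let (X_i, μ_i), i ∈ [n], be probability spaces, let i ∈ [n], let ℓ ≥ 2 be an even integer with conjugate exponent ℓ', let e = {i,j} be an edge, and let G(i) be a finite family of edges containing i but not j. With I_{e,G(i)} := E[∏_{ω=0}^{ℓ-1} f_e(x_i^{(ω)}, x_j) ∏_{e'∈G(i)} f_{e'}(x_i^{(ω)}, x_{e'∖{i}})] and I_{G(i)} := E[∏_{e'∈G(i)} ∏_{ω=0}^{ℓ-1} |f_{e'}|^{ℓ'}(x_i^{(ω)}, x_{e'∖{i}})] (expectations over x_i^{(0)},…,x_i^{(ℓ-1)} ∈ X_i and the remaining coordinates), one has I_{e,G(i)} ≤ ‖f_e‖_{□_ℓ(X_e)}^ℓ · I_{G(i)}^{1/ℓ'}. -/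
open MeasureTheory Finset

/-! Since `f_e` depends only on `(x_i, x_j)` and no `f_{e'}` with `e' ∈ G(i)` depends on `x_j`,
integrating `x_j` out first turns `I_{e,G(i)}` into `E[F(x_i^{(0)}, …, x_i^{(ℓ-1)}) ⬝ G]` with
`F(a) = E_{x_j} ∏_ω f_e(a_ω, x_j)` and `G = ∏_ω ∏_{e'} f_{e'}(x_i^{(ω)}, ·)`. Hölder with exponents
`ℓ, ℓ'` bounds this by `‖F‖_ℓ ‖G‖_{ℓ'}`, and `‖G‖_{ℓ'}^{ℓ'} = I_{G(i)}`. As `ℓ` is even,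
`‖F‖_ℓ^ℓ = E[F^ℓ]`, and writing the `ℓ`-th power with `ℓ` independent copies of `x_j` gives the box
integral `E ∏_{p,q} f_e(x_i^{(p)}, x_j^{(q)}) = ‖f_e‖_{□_ℓ}^{ℓ²}`. -/

open Function

section Integral
variable {Ω : Type*} [MeasurableSpace Ω] {P : Measure Ω}

theorem MeasureTheory.MeasurePreserving.integral_comp_of_aestronglyMeasurable {Ω' : Type*}
    [MeasurableSpace Ω'] {Q : Measure Ω'} {φ : Ω → Ω'} (hφ : MeasurePreserving φ P Q)
    {g : Ω' → ℝ} (hg : AEStronglyMeasurable g Q) : ∫ x, g (φ x) ∂P = ∫ y, g y ∂Q := by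
  rw [← hφ.map_eq] at hg
  rw [← integral_map hφ.aemeasurable hg, hφ.map_eq]

/-- If `Φ` resamples a coordinate of `Ω` from `β` without changing `G`, that coordinate can be
integrated out of `F` alone. -/
theorem integral_mul_eq_integral_integral_mul {B : Type*} [MeasurableSpace B] {β : Measure B}
    [SFinite P] [SFinite β] {Φ : Ω × B → Ω} (hΦ : MeasurePreserving Φ (P.prod β) P)
    {F G : Ω → ℝ} {K : Ω × B → ℝ} (hF : ∀ w, F (Φ w) = K w) (hG : ∀ w, G (Φ w) = G w.1)
    (hFG : Integrable (fun z => F z * G z) P) :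
    ∫ z, F z * G z ∂P = ∫ z, (∫ t, K (z, t) ∂β) * G z ∂P := by
  have hint : Integrable (fun w => K w * G w.1) (P.prod β) := by
    simpa only [comp_def, hF, hG] using (hΦ.integrable_comp hFG.aestronglyMeasurable).mpr hFG
  rw [← hΦ.integral_comp_of_aestronglyMeasurable hFG.aestronglyMeasurable]
  simp only [hF, hG]
  rw [integral_prod _ hint]
  simp only [integral_mul_const]

theorem integral_mul_le_Lp_mul_Lq_of_integrable_abs_rpow {p q : ℝ} (hpq : p.HolderConjugate q)
    {F G : Ω → ℝ} (hF : AEStronglyMeasurable F P) (hG : AEStronglyMeasurable G P)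
    (hFp : Integrable (fun z => |F z| ^ p) P) (hGq : Integrable (fun z => |G z| ^ q) P) :
    ∫ z, F z * G z ∂P ≤ (∫ z, |F z| ^ p ∂P) ^ (1 / p) * (∫ z, |G z| ^ q ∂P) ^ (1 / q) := by
  have memLp {H : Ω → ℝ} {r : ℝ} (hr : 0 < r) (hH : AEStronglyMeasurable H P)
      (hHr : Integrable (fun z => |H z| ^ r) P) : MemLp H (ENNReal.ofReal r) P := by
    refine (integrable_norm_rpow_iff hH (by simpa using hr) ENNReal.ofReal_ne_top).mp ?_
    simpa only [ENNReal.toReal_ofReal hr.le, Real.norm_eq_abs] using hHr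
  calc ∫ z, F z * G z ∂P ≤ ∫ z, |F z * G z| ∂P := (le_abs_self _).trans abs_integral_le_integral_abs
    _ = ∫ z, ‖F z‖ * ‖G z‖ ∂P := by simp only [abs_mul, Real.norm_eq_abs]
    _ ≤ _ := by
        simpa only [Real.norm_eq_abs] using integral_mul_norm_le_Lp_mul_Lq hpq
          (memLp hpq.pos hF hFp) (memLp hpq.symm.pos hG hGq)

end Integral

theorem abs_prod_prod_rpow {α β : Type*} (s : Finset α) (t : Finset β) (x : α → β → ℝ) (r : ℝ) :
    |∏ a ∈ s, ∏ b ∈ t, x a b| ^ r = ∏ b ∈ t, ∏ a ∈ s, |x a b| ^ r := by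
  rw [prod_comm, abs_prod, ← Real.finsetProd_rpow _ _ fun _ _ => abs_nonneg _]
  refine prod_congr rfl fun b _ => ?_
  rw [abs_prod, ← Real.finsetProd_rpow _ _ fun _ _ => abs_nonneg _]

theorem apply_update_update_of_notMem {ι E : Type*} [DecidableEq ι] {X : ι → Type*}
    {e : Finset ι} {g : (∀ k, X k) → E} (hg : ∀ x y : ∀ k, X k, (∀ k ∈ e, x k = y k) → g x = g y)
    {i j : ι} (hj : j ∉ e) (x : ∀ k, X k) (a : X i) (t : X j) :
    g (update (update x j t) i a) = g (update x i a) := by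
  refine hg _ _ fun k hk => ?_
  by_cases hki : k = i
  · subst hki; simp
  · simp [hki, show k ≠ j by rintro rfl; exact hj hk]

section Pi
variable {ι : Type*} [Fintype ι] {X : ι → Type*} [∀ k, MeasurableSpace (X k)]
  (μ : ∀ k, Measure (X k)) [∀ k, IsProbabilityMeasure (μ k)]

theorem measurePreserving_eval_prodMk_eval {i j : ι} (hij : i ≠ j) :
    MeasurePreserving (fun x : ∀ k, X k => (x i, x j)) (Measure.pi μ) ((μ i).prod (μ j)) := by
  refine ⟨by fun_prop, ?_⟩
  have hind : ProbabilityTheory.IndepFun (fun x : ∀ k, X k => x i) (fun x => x j) (Measure.pi μ) :=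
    (ProbabilityTheory.iIndepFun_pi (X := fun _ => id) fun _ => aemeasurable_id).indepFun hij
  rw [hind.map_prod_eq_prod_map_map (measurable_pi_apply i).aemeasurable
    (measurable_pi_apply j).aemeasurable,
    (measurePreserving_eval μ i).map_eq, (measurePreserving_eval μ j).map_eq]

variable [DecidableEq ι]

theorem measurePreserving_update (q : ι) :
    MeasurePreserving (fun p : (∀ k, X k) × X q => update p.1 q p.2)
      ((Measure.pi μ).prod (μ q)) (Measure.pi μ) := by
  have hm : Measurable (fun p : (∀ k, X k) × X q => update p.1 q p.2) := by fun_prop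
  refine ⟨hm, (Measure.pi_eq fun s hs => ?_).symm⟩
  have hpre : (fun p : (∀ k, X k) × X q => update p.1 q p.2) ⁻¹' Set.univ.pi s
      = Set.univ.pi (update s q Set.univ) ×ˢ s q := by
    ext ⟨x, t⟩
    simp only [Set.mem_preimage, Set.mem_prod, Set.mem_univ_pi]
    grind
  rw [Measure.map_apply hm (.univ_pi hs), hpre, Measure.prod_prod, Measure.pi_pi,
    Fintype.prod_eq_mul_prod_compl q, Fintype.prod_eq_mul_prod_compl q (fun k => μ k (s k)),
    update_self, measure_univ, one_mul, mul_comm]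
  congr 1
  exact prod_congr rfl fun k hk => by rw [update_of_ne (by simpa using hk)]

theorem measurePreserving_update_eval {J : Type*} [Fintype J] (q : ι) (ω : J) :
    MeasurePreserving (fun z : (J → X q) × (∀ k, X k) => update z.2 q (z.1 ω))
      ((Measure.pi fun _ : J => μ q).prod (Measure.pi μ)) (Measure.pi μ) := by
  have hswap : MeasurePreserving (fun z : (J → X q) × (∀ k, X k) => (z.2, z.1 ω))
      ((Measure.pi fun _ : J => μ q).prod (Measure.pi μ)) ((Measure.pi μ).prod (μ q)) :=
    ((MeasurePreserving.id _).prod (measurePreserving_eval _ ω)).comp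
      Measure.measurePreserving_swap
  exact (measurePreserving_update μ q).comp hswap

theorem measurePreserving_update_update (i j : ι) :
    MeasurePreserving (fun w : (∀ k, X k) × (X i × X j) => update (update w.1 j w.2.2) i w.2.1)
      ((Measure.pi μ).prod ((μ i).prod (μ j))) (Measure.pi μ) := by
  have hshuffle : MeasurePreserving (fun w : (∀ k, X k) × (X i × X j) => ((w.1, w.2.2), w.2.1))
      ((Measure.pi μ).prod ((μ i).prod (μ j))) (((Measure.pi μ).prod (μ j)).prod (μ i)) :=
    (measurePreserving_prodAssoc _ _ _).symm.comp
      ((MeasurePreserving.id _).prod Measure.measurePreserving_swap)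
  exact (measurePreserving_update μ i).comp
    (((measurePreserving_update μ j).prod (.id _)).comp hshuffle)

theorem exists_aestronglyMeasurable_eq_comp_eval_prodMk_eval {E : Type*} [TopologicalSpace E]
    {i j : ι} (hij : i ≠ j) {f : (∀ k, X k) → E} (hf : AEStronglyMeasurable f (Measure.pi μ))
    (hfdep : ∀ x y : ∀ k, X k, x i = y i → x j = y j → f x = f y) :
    ∃ h : X i × X j → E, AEStronglyMeasurable h ((μ i).prod (μ j)) ∧ ∀ x, f x = h (x i, x j) := by
  obtain ⟨x₀⟩ : Nonempty (∀ k, X k) := ⟨fun k => (nonempty_of_isProbabilityMeasure (μ k)).some⟩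
  refine ⟨fun w => f (update (update x₀ j w.2) i w.1), ?_,
    fun x => hfdep _ _ (by simp) (by simp [hij.symm])⟩
  -- `f` after resampling the coordinates `i, j` is `h ∘ Prod.snd`
  have hcomp := hf.comp_quasiMeasurePreserving
    (measurePreserving_update_update μ i j).quasiMeasurePreserving
  refine .of_comp_snd (hcomp.congr (.of_forall fun w => ?_)) (IsProbabilityMeasure.ne_zero _)
  exact hfdep _ _ (by simp) (by simp [hij.symm])

end Pi

section Box
variable {A B : Type*} {ℓ : ℕ} {h : A × B → ℝ}

/-- The integrand of `‖h‖_{□_ℓ}^{ℓ²}`. -/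
def boxProd (ℓ : ℕ) (h : A × B → ℝ) (w : (Fin ℓ → A) × (Fin ℓ → B)) : ℝ :=
  ∏ pq : Fin ℓ × Fin ℓ, h (w.1 pq.1, w.2 pq.2)

variable [MeasurableSpace B] {β : Measure B}

theorem integral_boxProd_right [SigmaFinite β] (a : Fin ℓ → A) :
    ∫ b, boxProd ℓ h (a, b) ∂(Measure.pi fun _ : Fin ℓ => β) = (∫ v, ∏ p, h (a p, v) ∂β) ^ ℓ := by
  simp only [boxProd, Fintype.prod_prod_type_right]
  simpa using integral_fintype_prod_eq_pow (ι := Fin ℓ) (μ := β) fun v => ∏ p, h (a p, v)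

variable [MeasurableSpace A] {α : Measure A}

theorem aestronglyMeasurable_boxProd [IsProbabilityMeasure α] [IsProbabilityMeasure β]
    (hh : AEStronglyMeasurable h (α.prod β)) :
    AEStronglyMeasurable (boxProd ℓ h)
      ((Measure.pi fun _ : Fin ℓ => α).prod (Measure.pi fun _ : Fin ℓ => β)) :=
  Finset.aestronglyMeasurable_fun_prod _ fun pq _ => hh.comp_quasiMeasurePreserving
    ((measurePreserving_eval _ pq.1).prod (measurePreserving_eval _ pq.2)).quasiMeasurePreserving

theorem aestronglyMeasurable_prod_eval_fst [IsProbabilityMeasure α] [SFinite β]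
    (hh : AEStronglyMeasurable h (α.prod β)) :
    AEStronglyMeasurable (fun w : (Fin ℓ → A) × B => ∏ p, h (w.1 p, w.2))
      ((Measure.pi fun _ : Fin ℓ => α).prod β) :=
  Finset.aestronglyMeasurable_fun_prod _ fun p _ => hh.comp_quasiMeasurePreserving
    ((measurePreserving_eval _ p).prod (.id β)).quasiMeasurePreserving

theorem integral_boxProd [SigmaFinite α] [SigmaFinite β]
    (hK : Integrable (boxProd ℓ h)
      ((Measure.pi fun _ : Fin ℓ => α).prod (Measure.pi fun _ : Fin ℓ => β))) :
    ∫ w, boxProd ℓ h w ∂((Measure.pi fun _ : Fin ℓ => α).prod (Measure.pi fun _ : Fin ℓ => β)) =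
      ∫ a, (∫ v, ∏ p, h (a p, v) ∂β) ^ ℓ ∂(Measure.pi fun _ : Fin ℓ => α) := by
  simp only [integral_prod _ hK, integral_boxProd_right]

theorem integrable_pow_integral_of_integrable_boxProd [SigmaFinite β]
    (hK : Integrable (boxProd ℓ h)
      ((Measure.pi fun _ : Fin ℓ => α).prod (Measure.pi fun _ : Fin ℓ => β))) :
    Integrable (fun a => (∫ v, ∏ p, h (a p, v) ∂β) ^ ℓ) (Measure.pi fun _ : Fin ℓ => α) := by
  simpa only [integral_boxProd_right] using hK.integral_prod_left

theorem integral_boxProd_nonneg [SigmaFinite α] [SigmaFinite β] (hev : Even ℓ)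
    (hK : Integrable (boxProd ℓ h)
      ((Measure.pi fun _ : Fin ℓ => α).prod (Measure.pi fun _ : Fin ℓ => β))) :
    0 ≤ ∫ w, boxProd ℓ h w
      ∂((Measure.pi fun _ : Fin ℓ => α).prod (Measure.pi fun _ : Fin ℓ => β)) := by
  rw [integral_boxProd hK]
  exact integral_nonneg fun a => hev.pow_nonneg _

end Box

theorem prod_filter_eq_boxProd {ι : Type*} [Fintype ι] [DecidableEq ι] {X : ι → Type*}
    {i j : ι} (hij : i ≠ j) {ℓ : ℕ} [NeZero ℓ]
    -- a parameter: on `Fin n` the filter is elaborated with `Nat.decidableForallFin` instead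
    [DecidablePred fun ω : ι → Fin ℓ => ∀ k ∉ ({i, j} : Finset ι), (ω k : ℕ) = 0]
    {f : (∀ k, X k) → ℝ} {h : X i × X j → ℝ} (hfh : ∀ x, f x = h (x i, x j))
    (x : ∀ k, Fin ℓ → X k) :
    ∏ ω ∈ univ.filter (fun ω : ι → Fin ℓ => ∀ k ∉ ({i, j} : Finset ι), (ω k : ℕ) = 0),
      f (fun k => x k (ω k)) = boxProd ℓ h (x i, x j) := by
  refine prod_bij' (fun ω _ => (ω i, ω j))
    (fun pq _ k => if k = i then pq.1 else if k = j then pq.2 else 0) (by simp) ?_ ?_ ?_ ?_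
  · intro pq _
    simp only [mem_filter, mem_univ, true_and, mem_insert, mem_singleton]
    intro k hk
    simp [not_or.mp hk]
  · intro ω hω
    simp only [mem_filter, mem_univ, true_and, mem_insert, mem_singleton] at hω
    funext k
    by_cases hki : k = i
    · simp [hki]
    by_cases hkj : k = j
    · simp [hkj, hij.symm]
    simpa [hki, hkj, Fin.ext_iff] using (hω k (by tauto)).symm
  · intro pq _
    simp [hij.symm]
  · intro ω _
    exact hfh _

section BoxNorm
variable {ι : Type*} [Fintype ι] [DecidableEq ι] {X : ι → Type*} [∀ k, MeasurableSpace (X k)]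
  (μ : ∀ k, Measure (X k)) [∀ k, IsProbabilityMeasure (μ k)]
  {i j : ι} {ℓ : ℕ} [NeZero ℓ] {f : (∀ k, X k) → ℝ} {h : X i × X j → ℝ}

theorem integrable_boxProd_of_integrable_prod_filter (hij : i ≠ j)
    (hh : AEStronglyMeasurable h ((μ i).prod (μ j))) (hfh : ∀ x, f x = h (x i, x j))
    [DecidablePred fun ω : ι → Fin ℓ => ∀ k ∉ ({i, j} : Finset ι), (ω k : ℕ) = 0]
    (hf : Integrable (fun x : ∀ k, Fin ℓ → X k =>
      ∏ ω ∈ univ.filter (fun ω : ι → Fin ℓ => ∀ k ∉ ({i, j} : Finset ι), (ω k : ℕ) = 0),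
        f (fun k => x k (ω k))) (Measure.pi fun k => Measure.pi fun _ : Fin ℓ => μ k)) :
    Integrable (boxProd ℓ h)
      ((Measure.pi fun _ : Fin ℓ => μ i).prod (Measure.pi fun _ : Fin ℓ => μ j)) := by
  simp only [prod_filter_eq_boxProd hij hfh] at hf
  exact ((measurePreserving_eval_prodMk_eval _ hij).integrable_comp (g := boxProd ℓ h)
    (aestronglyMeasurable_boxProd hh)).mp hf

theorem boxNormOn_pair_eq (hij : i ≠ j) (hh : AEStronglyMeasurable h ((μ i).prod (μ j)))
    (hfh : ∀ x, f x = h (x i, x j)) :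
    boxNormOn μ {i, j} ℓ f = (∫ w, boxProd ℓ h w
      ∂((Measure.pi fun _ : Fin ℓ => μ i).prod (Measure.pi fun _ : Fin ℓ => μ j))) ^
        ((ℓ : ℝ) ^ 2)⁻¹ := by
  rw [boxNormOn, card_pair hij]
  simp only [prod_filter_eq_boxProd hij hfh]
  rw [(measurePreserving_eval_prodMk_eval _ hij).integral_comp_of_aestronglyMeasurable
    (aestronglyMeasurable_boxProd hh)]

end BoxNorm

section Core
variable {ι : Type*} [Fintype ι] [DecidableEq ι] {X : ι → Type*} [∀ k, MeasurableSpace (X k)]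
  (μ : ∀ k, Measure (X k)) [∀ k, IsProbabilityMeasure (μ k)]
  {A : Type*} [MeasurableSpace A] {α : Measure A} [IsProbabilityMeasure α] {ℓ : ℕ}

theorem integral_prod_mul_le_integral_boxProd_mul (j : ι) (hℓ : 2 ≤ ℓ) (hev : Even ℓ)
    {h : A × X j → ℝ} (hh : AEStronglyMeasurable h (α.prod (μ j)))
    (hK : Integrable (boxProd ℓ h)
      ((Measure.pi fun _ : Fin ℓ => α).prod (Measure.pi fun _ : Fin ℓ => μ j)))
    {G : (Fin ℓ → A) × (∀ k, X k) → ℝ} (hG : ∀ z t, G (z.1, update z.2 j t) = G z)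
    (hGm : AEStronglyMeasurable G ((Measure.pi fun _ : Fin ℓ => α).prod (Measure.pi μ)))
    (hGq : Integrable (fun z => |G z| ^ ((ℓ : ℝ) / ((ℓ : ℝ) - 1)))
      ((Measure.pi fun _ : Fin ℓ => α).prod (Measure.pi μ)))
    (hFG : Integrable (fun z => (∏ p, h (z.1 p, z.2 j)) * G z)
      ((Measure.pi fun _ : Fin ℓ => α).prod (Measure.pi μ))) :
    ∫ z, (∏ p, h (z.1 p, z.2 j)) * G z ∂((Measure.pi fun _ : Fin ℓ => α).prod (Measure.pi μ)) ≤
      (∫ w, boxProd ℓ h w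
        ∂((Measure.pi fun _ : Fin ℓ => α).prod (Measure.pi fun _ : Fin ℓ => μ j))) ^ (ℓ : ℝ)⁻¹ *
      (∫ z, |G z| ^ ((ℓ : ℝ) / ((ℓ : ℝ) - 1))
        ∂((Measure.pi fun _ : Fin ℓ => α).prod (Measure.pi μ))) ^ ((ℓ : ℝ) / ((ℓ : ℝ) - 1))⁻¹ := by
  set ν := (Measure.pi fun _ : Fin ℓ => α).prod (Measure.pi μ)
  set Fb : (Fin ℓ → A) → ℝ := fun a => ∫ v, ∏ p, h (a p, v) ∂(μ j)
  have hΦ : MeasurePreserving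
      (fun w : ((Fin ℓ → A) × (∀ k, X k)) × X j => (w.1.1, update w.1.2 j w.2)) (ν.prod (μ j)) ν :=
    ((MeasurePreserving.id _).prod (measurePreserving_update μ j)).comp
      (measurePreserving_prodAssoc _ _ _)
  have hpq : (ℓ : ℝ).HolderConjugate ((ℓ : ℝ) / ((ℓ : ℝ) - 1)) :=
    .conjExponent (by exact_mod_cast hℓ)
  have hFb : AEStronglyMeasurable Fb (Measure.pi fun _ : Fin ℓ => α) :=
    (aestronglyMeasurable_prod_eval_fst hh).integral_prod_right'
  have habs (y : ℝ) : |y| ^ (ℓ : ℝ) = y ^ ℓ := by rw [Real.rpow_natCast, hev.pow_abs]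
  have hFbℓ : Integrable (fun z : (Fin ℓ → A) × (∀ k, X k) => |Fb z.1| ^ (ℓ : ℝ)) ν := by
    simpa only [habs] using
      (integrable_pow_integral_of_integrable_boxProd hK).comp_fst (Measure.pi μ)
  have hFbnorm : ∫ z, |Fb z.1| ^ (ℓ : ℝ) ∂ν = ∫ w, boxProd ℓ h w
      ∂((Measure.pi fun _ : Fin ℓ => α).prod (Measure.pi fun _ : Fin ℓ => μ j)) := by
    calc ∫ z, |Fb z.1| ^ (ℓ : ℝ) ∂ν = ∫ z, Fb z.1 ^ ℓ ∂ν := by simp only [habs]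
      _ = ∫ a, Fb a ^ ℓ ∂(Measure.pi fun _ : Fin ℓ => α) := by
        rw [integral_fun_fst (fun a => Fb a ^ ℓ), probReal_univ, one_smul]
      _ = _ := (integral_boxProd hK).symm
  calc _ = ∫ z, Fb z.1 * G z ∂ν :=
        integral_mul_eq_integral_integral_mul hΦ (K := fun w => ∏ p, h (w.1.1 p, w.2))
          (fun w => by simp) (fun w => hG _ _) hFG
    _ ≤ _ := integral_mul_le_Lp_mul_Lq_of_integrable_abs_rpow hpq hFb.comp_fst hGm hFbℓ hGq
    _ = _ := by rw [hFbnorm, one_div, one_div]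

end Core

/-- The expectation is modelled over `ℓ` independent copies `z.1 ω` of the `i`-th
coordinate together with the remaining coordinates `z.2`; `x_i^{(ω)}` is substituted
via `Function.update z.2 i (z.1 ω)`. -/
theorem holder_step {n : ℕ} {X : Fin n → Type*}
    [∀ k, MeasurableSpace (X k)] (μ : ∀ k, Measure (X k))
    [∀ k, IsProbabilityMeasure (μ k)]
    (i j : Fin n) (hij : i ≠ j)
    (ℓ : ℕ) (hℓ : 2 ≤ ℓ) (hev : Even ℓ)
    (Gi : Finset (Finset (Fin n))) (hGi : ∀ e' ∈ Gi, i ∈ e' ∧ j ∉ e')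
    (f : (∀ k, X k) → ℝ)
    (hfdep : ∀ x y : ∀ k, X k, x i = y i → x j = y j → f x = f y)
    (g : Finset (Fin n) → (∀ k, X k) → ℝ)
    (hgdep : ∀ e' ∈ Gi, ∀ x y : ∀ k, X k, (∀ k ∈ e', x k = y k) → g e' x = g e' y)
    (hgint : ∀ e' ∈ Gi, Integrable (g e') (Measure.pi μ))
    (hfint : Integrable f (Measure.pi μ))
    (hfbox : Integrable
      (fun x : ∀ k, Fin ℓ → X k =>
        ∏ ω ∈ Finset.univ.filter
            (fun ω : Fin n → Fin ℓ => ∀ k ∉ ({i, j} : Finset (Fin n)), (ω k : ℕ) = 0),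
          f (fun k => x k (ω k)))
      (Measure.pi fun k => Measure.pi fun _ : Fin ℓ => μ k))
    (hIe : Integrable
      (fun z : (Fin ℓ → X i) × (∀ k, X k) =>
        ∏ ω : Fin ℓ, (f (Function.update z.2 i (z.1 ω)) *
          ∏ e' ∈ Gi, g e' (Function.update z.2 i (z.1 ω))))
      ((Measure.pi fun _ : Fin ℓ => μ i).prod (Measure.pi μ)))
    (hIG : Integrable
      (fun z : (Fin ℓ → X i) × (∀ k, X k) =>
        ∏ e' ∈ Gi, ∏ ω : Fin ℓ,
          |g e' (Function.update z.2 i (z.1 ω))| ^ ((ℓ : ℝ) / ((ℓ : ℝ) - 1)))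
      ((Measure.pi fun _ : Fin ℓ => μ i).prod (Measure.pi μ))) :
    (∫ z : (Fin ℓ → X i) × (∀ k, X k),
        ∏ ω : Fin ℓ, (f (Function.update z.2 i (z.1 ω)) *
          ∏ e' ∈ Gi, g e' (Function.update z.2 i (z.1 ω)))
      ∂((Measure.pi fun _ : Fin ℓ => μ i).prod (Measure.pi μ))) ≤
      boxNormOn μ {i, j} ℓ f ^ ℓ *
        (∫ z : (Fin ℓ → X i) × (∀ k, X k),
            ∏ e' ∈ Gi, ∏ ω : Fin ℓ,
              |g e' (Function.update z.2 i (z.1 ω))| ^ ((ℓ : ℝ) / ((ℓ : ℝ) - 1))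
          ∂((Measure.pi fun _ : Fin ℓ => μ i).prod (Measure.pi μ))) ^
            (((ℓ : ℝ) / ((ℓ : ℝ) - 1))⁻¹) := by
  obtain ⟨h, hh, hfh⟩ :=
    exists_aestronglyMeasurable_eq_comp_eval_prodMk_eval μ hij hfint.aestronglyMeasurable hfdep
  have : NeZero ℓ := ⟨by omega⟩
  set G : (Fin ℓ → X i) × (∀ k, X k) → ℝ :=
    fun z => ∏ ω : Fin ℓ, ∏ e' ∈ Gi, g e' (Function.update z.2 i (z.1 ω))
  have hsplit (z : (Fin ℓ → X i) × (∀ k, X k)) :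
      ∏ ω : Fin ℓ, (f (Function.update z.2 i (z.1 ω)) *
        ∏ e' ∈ Gi, g e' (Function.update z.2 i (z.1 ω))) = (∏ ω, h (z.1 ω, z.2 j)) * G z := by
    simp [prod_mul_distrib, hfh, hij.symm, G]
  have hGabs (z : (Fin ℓ → X i) × (∀ k, X k)) :
      ∏ e' ∈ Gi, ∏ ω : Fin ℓ, |g e' (Function.update z.2 i (z.1 ω))| ^ ((ℓ : ℝ) / ((ℓ : ℝ) - 1))
        = |G z| ^ ((ℓ : ℝ) / ((ℓ : ℝ) - 1)) :=
    (abs_prod_prod_rpow _ _ _ _).symm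
  have hG (z : (Fin ℓ → X i) × (∀ k, X k)) (t : X j) : G (z.1, update z.2 j t) = G z :=
    prod_congr rfl fun ω _ => prod_congr rfl fun e' he' =>
      apply_update_update_of_notMem (hgdep e' he') (hGi e' he').2 _ _ _
  have hGm : AEStronglyMeasurable G ((Measure.pi fun _ : Fin ℓ => μ i).prod (Measure.pi μ)) :=
    Finset.aestronglyMeasurable_fun_prod _ fun ω _ => Finset.aestronglyMeasurable_fun_prod _
      fun e' he' => (hgint e' he').aestronglyMeasurable.comp_quasiMeasurePreserving
        (measurePreserving_update_eval μ i ω).quasiMeasurePreserving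
  have hK := integrable_boxProd_of_integrable_prod_filter μ hij hh hfh hfbox
  simp only [hsplit, hGabs] at hIe hIG ⊢
  rw [boxNormOn_pair_eq μ hij hh hfh, ← Real.rpow_natCast,
    ← Real.rpow_mul (integral_boxProd_nonneg hev hK),
    show ((ℓ : ℝ) ^ 2)⁻¹ * ℓ = (ℓ : ℝ)⁻¹ by field_simp]
  exact integral_prod_mul_le_integral_boxProd_mul μ j hℓ hev hh hK hG hGm hIG hIe
end
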